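/- arXiv:2206.00412 — 10 statements merged into one kernel-verified Lean document; each statement's English description precedes it below -/
import Mathlib

section
/- If M(n) denotes the maximum number of divisors τ(m) over 1 ≤ m ≤ n, then for all positive integers k and n, M(k·n) ≤ 2k·M(n). -/
open Finset
open scoped Pointwise

theorem divisor_max_mul_bound (k n : ℕ) (hk : 0 < k) (hn : 0 < n) :
    ((Finset.Icc 1 (k * n)).sup fun m => m.divisors.card) ≤
      2 * k * ((Finset.Icc 1 n).sup fun m => m.divisors.card) := by
  apply Finset.sup_le
  intro m hm
  rw [Finset.mem_Icc] at hm
  obtain ⟨hm1, hmkn⟩ := hm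
  have hm0 : m ≠ 0 := by omega
  set S := m.divisors.filter (· ≤ n) with hS
  have h1S : (1 : ℕ) ∈ S := by
    simp only [hS, Finset.mem_filter]
    exact ⟨Nat.one_mem_divisors.mpr hm0, hn⟩
  have hSne : S.Nonempty := ⟨1, h1S⟩
  set a := S.max' hSne with ha
  have haS : a ∈ S := S.max'_mem hSne
  have hadvd : a ∣ m := (Nat.mem_divisors.mp (Finset.mem_filter.mp haS).1).1
  have haN : a ≤ n := by
    have := (Finset.mem_filter.mp haS).2
    simpa using this
  have ha0 : 0 < a := Nat.pos_of_dvd_of_pos hadvd (by omega)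
  set b := m / a with hb
  have hab : a * b = m := Nat.mul_div_cancel' hadvd
  have hb0 : b ≠ 0 := by
    intro h; rw [h, mul_zero] at hab; omega
  -- τ(b) ≤ k
  have hbk : b.divisors.card ≤ k := by
    have hsub : b.divisors ⊆ insert b (Finset.Icc 1 (k - 1)) := by
      intro f hf
      have hfd : f ∣ b := (Nat.mem_divisors.mp hf).1
      have hf0 : 0 < f := Nat.pos_of_dvd_of_pos hfd (Nat.pos_of_ne_zero hb0)
      by_cases hfb : f = b
      · simp [hfb]
      · apply Finset.mem_insert_of_mem
        rw [Finset.mem_Icc]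
        set e := b / f with he
        have hef : f * e = b := Nat.mul_div_cancel' hfd
        have he2 : 2 ≤ e := by
          rcases Nat.lt_or_ge e 2 with h | h
          · interval_cases e
            · simp at hef; omega
            · simp at hef; omega
          · exact h
        have haedvd : a * e ∣ m := by
          rw [← hab]
          exact mul_dvd_mul_left a ⟨f, by rw [← hef]; ring⟩
        have haen : n < a * e := by
          by_contra hcon
          push_neg at hcon
          have hmem : a * e ∈ S := Finset.mem_filter.mpr
            ⟨Nat.mem_divisors.mpr ⟨haedvd, hm0⟩, by simpa using hcon⟩
          have hle := S.le_max' _ hmem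
          nlinarith
        have hfk : f < k := by
          have hfm : f * (a * e) = m := by rw [← hab, ← hef]; ring
          nlinarith
        omega
    calc b.divisors.card ≤ (insert b (Finset.Icc 1 (k - 1))).card :=
          Finset.card_le_card hsub
      _ ≤ (Finset.Icc 1 (k - 1)).card + 1 := Finset.card_insert_le _ _
      _ = k := by rw [Nat.card_Icc]; omega
  -- τ(a) ≤ M(n)
  have haM : a.divisors.card ≤ (Finset.Icc 1 n).sup fun m => m.divisors.card :=
    Finset.le_sup (f := fun m => m.divisors.card) (Finset.mem_Icc.mpr ⟨ha0, haN⟩)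
  -- τ(m) ≤ τ(a) * τ(b)
  have hmul : m.divisors.card ≤ a.divisors.card * b.divisors.card := by
    rw [← hab, Nat.divisors_mul]
    exact Finset.card_mul_le
  calc m.divisors.card ≤ a.divisors.card * b.divisors.card := hmul
    _ ≤ ((Finset.Icc 1 n).sup fun m => m.divisors.card) * k :=
        Nat.mul_le_mul haM hbk
    _ ≤ 2 * k * ((Finset.Icc 1 n).sup fun m => m.divisors.card) := by nlinarith
end

section
/- If n ≥ 2, then there exists an even integer r with 1 ≤ r ≤ n such that τ(r) = max_{1 ≤ m ≤ n} τ(m); i.e., the maximum of the divisor function on [1,n] is attained at an even integer. -/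
/-!
Let `m ∈ [1, n]` maximise `τ`. Since `τ 2 = 2 > τ 1`, we have `m ≥ 2`. If `m` is odd, write
`m = p ^ k * s` with `p` its least prime factor and `p ∤ s`; then `2 ^ k * s` is even, at most
`m`, and has the same number of divisors `(k + 1) τ(s)`, because `2 ∤ s`.
-/

open Finset

namespace Nat

theorem card_divisors_prime_pow_mul {p s : ℕ} (hp : p.Prime) (hps : p.Coprime s) (k : ℕ) :
    #(p ^ k * s).divisors = (k + 1) * #s.divisors := by
  rw [(hps.pow_left k).card_divisors_mul, ← ArithmeticFunction.sigma_zero_apply,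
    ArithmeticFunction.sigma_zero_apply_prime_pow hp]

theorem exists_even_le_card_divisors_eq {m : ℕ} (hm : 2 ≤ m) :
    ∃ r, Even r ∧ 1 ≤ r ∧ r ≤ m ∧ #r.divisors = #m.divisors := by
  rcases Nat.even_or_odd m with hme | hmo
  · exact ⟨m, hme, by omega, le_rfl, rfl⟩
  set p := m.minFac
  set k := m.factorization p
  set s := ordCompl[p] m
  have hm0 : m ≠ 0 := by omega
  have hp : p.Prime := minFac_prime (by omega)
  have hp2 : 2 < p := lt_of_le_of_ne hp.two_le fun h =>
    (Nat.not_even_iff_odd.mpr hmo) (even_iff_two_dvd.mpr (h ▸ minFac_dvd m))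
  have hk : 1 ≤ k := hp.factorization_pos_of_dvd hm0 (minFac_dvd m)
  have hs : 0 < s := ordCompl_pos p hm0
  have hso : Odd s := hmo.of_dvd_nat (ordCompl_dvd m p)
  have hpsm : p ^ k * s = m := ordProj_mul_ordCompl_eq_self m p
  refine ⟨2 ^ k * s, ?_, ?_, ?_, ?_⟩
  · exact (Nat.even_pow.mpr ⟨even_two, by omega⟩).mul_right s
  · exact Nat.mul_pos (Nat.pow_pos two_pos) hs
  · calc 2 ^ k * s ≤ p ^ k * s := Nat.mul_le_mul_right s (Nat.pow_le_pow_left hp2.le k)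
      _ = m := hpsm
  · rw [← hpsm, card_divisors_prime_pow_mul prime_two (coprime_two_left.mpr hso),
      card_divisors_prime_pow_mul hp (coprime_ordCompl hp hm0)]

end Nat

theorem divisor_max_attained_even (n : ℕ) (hn : 2 ≤ n) :
    ∃ r : ℕ, Even r ∧ 1 ≤ r ∧ r ≤ n ∧
      r.divisors.card = ((Finset.Icc 1 n).sup fun m => m.divisors.card) := by
  obtain ⟨m, hm, hmax⟩ :=
    exists_mem_eq_sup (Icc 1 n) ⟨1, mem_Icc.mpr ⟨le_rfl, by omega⟩⟩ fun m => #m.divisors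
  rw [mem_Icc] at hm
  have hm2 : 2 ≤ m := by
    by_contra! hm1
    have h2 : #(Nat.divisors 2) ≤ #m.divisors :=
      hmax ▸ le_sup (f := fun m => #m.divisors) (mem_Icc.mpr ⟨one_le_two, hn⟩)
    rw [show m = 1 by omega, Nat.prime_two.divisors] at h2
    simp at h2
  obtain ⟨r, hre, hr1, hrm, hr⟩ := Nat.exists_even_le_card_divisors_eq hm2
  exact ⟨r, hre, hr1, hrm.trans hm.2, hr.trans hmax.symm⟩
end

section
/- For every positive integer n, σ(n) ≤ 1.44 · n · √(log(n+2)), where σ(n) is the sum of divisors of n. -/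
/-!
Write `f n = σ n / n` for the abundancy. If `p ∣ n` has `p`-part `q`, then
`f n ≤ (q + 1) / q * f (n / p)`, so the bound passes from `n / p` to `n` as soon as
`((q + 1) / q) ^ 2 * log (n / p + 2) ≤ log (n + 2)`; this drives a strong induction.
When this fails for every prime factor, each `p`-part `q` obeys
`(q + 1) * log (p * (q + 2) / (q + 2 * p)) < 2 * log (n + 2)`, and `f n ≤ ∏_{p ∣ n} p / (p - 1)`.
If the largest prime factor `P` is at least `17`, the primes above `13` contribute at most
`√(P / 15)` (as `p / (p - 1) ≤ √(p / (p - 2))` and the product over odd numbers telescopes),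
while `log (n + 2) > 9 / 10 * (P + 1)`. Otherwise `f n ≤ ∏_{p ≤ 13} p / (p - 1) = 1001 / 192`,
which suffices unless `log (n + 2) < 13.11`; then every `p`-part is so small that `n` divides
`2 ^ 5 * 3 ^ 2 * 5 * 7 * 11 * 13`, and a finite check leaves ten values of `n`, checked directly.
-/

open Finset Real
open scoped ArithmeticFunction.sigma

noncomputable def abundancy (n : ℕ) : ℝ := σ 1 n / n

lemma sigma_one_prime_pow_succ {p : ℕ} (hp : p.Prime) (b : ℕ) :
    σ 1 (p ^ (b + 1)) = σ 1 (p ^ b) + p ^ (b + 1) := by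
  rw [ArithmeticFunction.sigma_one_apply_prime_pow hp,
    ArithmeticFunction.sigma_one_apply_prime_pow hp, sum_range_succ]

lemma sigma_one_prime_pow_succ' {p : ℕ} (hp : p.Prime) (b : ℕ) :
    σ 1 (p ^ (b + 1)) = p * σ 1 (p ^ b) + 1 := by
  rw [ArithmeticFunction.sigma_one_apply_prime_pow hp,
    ArithmeticFunction.sigma_one_apply_prime_pow hp, sum_range_succ', mul_sum]
  simp [pow_succ']

lemma pow_le_sigma_one_pow {p : ℕ} (hp : p.Prime) (b : ℕ) : p ^ b ≤ σ 1 (p ^ b) := by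
  rw [ArithmeticFunction.sigma_one_apply_prime_pow hp]
  exact single_le_sum (f := (p ^ ·)) (fun _ _ ↦ Nat.zero_le _) (self_mem_range_succ b)

lemma pow_mul_sigma_one_le {p : ℕ} (hp : p.Prime) (b : ℕ) :
    p ^ (b + 1) * σ 1 (p ^ (b + 1)) ≤ p * (p ^ (b + 1) + 1) * σ 1 (p ^ b) := by
  have h := Nat.mul_le_mul_left p (pow_le_sigma_one_pow hp b)
  rw [sigma_one_prime_pow_succ' hp, pow_succ']
  nlinarith

lemma ordProj_mul_sigma_one_le {n p : ℕ} (hp : p.Prime) (hpn : p ∣ n) (hn : n ≠ 0) :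
    ordProj[p] n * σ 1 n ≤ p * (ordProj[p] n + 1) * σ 1 (n / p) := by
  obtain ⟨b, hb⟩ : ∃ b, n.factorization p = b + 1 :=
    Nat.exists_eq_add_one.2 (hp.factorization_pos_of_dvd hn hpn)
  have hcop (k : ℕ) : Nat.Coprime (p ^ k) (ordCompl[p] n) :=
    (Nat.coprime_ordCompl hp hn).pow_left k
  have hn' : n = p ^ (b + 1) * ordCompl[p] n := by
    rw [← hb, Nat.ordProj_mul_ordCompl_eq_self]
  have hnp : n / p = p ^ b * ordCompl[p] n := by
    conv_lhs => rw [hn', pow_succ', mul_assoc]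
    exact Nat.mul_div_cancel_left _ hp.pos
  set m := ordCompl[p] n
  rw [hnp, ArithmeticFunction.isMultiplicative_sigma.map_mul_of_coprime (hcop b), hb]
  conv_lhs => rw [hn', ArithmeticFunction.isMultiplicative_sigma.map_mul_of_coprime (hcop (b + 1))]
  calc p ^ (b + 1) * (σ 1 (p ^ (b + 1)) * σ 1 m)
      = p ^ (b + 1) * σ 1 (p ^ (b + 1)) * σ 1 m := by ring
    _ ≤ p * (p ^ (b + 1) + 1) * σ 1 (p ^ b) * σ 1 m :=
        Nat.mul_le_mul_right _ (pow_mul_sigma_one_le hp b)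
    _ = _ := by ring

lemma abundancy_le_mul_abundancy_div {n p : ℕ} (hp : p.Prime) (hpn : p ∣ n) (hn : n ≠ 0) :
    abundancy n ≤ (((ordProj[p] n : ℕ) + 1) / (ordProj[p] n : ℕ) : ℝ) * abundancy (n / p) := by
  have hq : (0 : ℝ) < (ordProj[p] n : ℕ) := by exact_mod_cast Nat.ordProj_pos n p
  have hn0 : (0 : ℝ) < n := by exact_mod_cast Nat.pos_of_ne_zero hn
  have hp0 : (p : ℝ) ≠ 0 := by exact_mod_cast hp.ne_zero
  have key : ((ordProj[p] n : ℕ) * σ 1 n : ℝ) ≤ p * ((ordProj[p] n : ℕ) + 1) * σ 1 (n / p) := by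
    exact_mod_cast ordProj_mul_sigma_one_le hp hpn hn
  unfold abundancy
  rw [Nat.cast_div hpn hp0, div_le_iff₀ hn0]
  field_simp
  linarith

lemma sigma_one_prime_pow_le {p : ℕ} (hp : p.Prime) (a : ℕ) :
    (σ 1 (p ^ a) : ℝ) ≤ p ^ a * (p / (p - 1)) := by
  have h := congrArg (Nat.cast (R := ℝ))
    ((sigma_one_prime_pow_succ hp a).symm.trans (sigma_one_prime_pow_succ' hp a))
  have hp1 : (1 : ℝ) < p := by exact_mod_cast hp.one_lt
  push_cast at h
  rw [pow_succ] at h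
  rw [mul_div_assoc', le_div_iff₀ (by linarith)]
  linarith

lemma abundancy_le_prod_primeFactors {n : ℕ} (hn : n ≠ 0) :
    abundancy n ≤ ∏ p ∈ n.primeFactors, (p / (p - 1) : ℝ) := by
  have hσ : (σ 1 n : ℝ) = ∏ p ∈ n.primeFactors, (σ 1 (p ^ n.factorization p) : ℝ) := by
    rw [ArithmeticFunction.isMultiplicative_sigma.multiplicative_factorization _ hn,
      Finsupp.prod, Nat.support_factorization, Nat.cast_prod]
  have hn' : (n : ℝ) = ∏ p ∈ n.primeFactors, (p ^ n.factorization p : ℝ) := by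
    conv_lhs => rw [← Nat.prod_factorization_pow_eq_self hn]
    rw [Finsupp.prod, Nat.support_factorization]
    push_cast
    rfl
  rw [abundancy, hσ, hn', ← prod_div_distrib]
  refine prod_le_prod (fun _ _ ↦ by positivity) fun p hp ↦ ?_
  have hp := Nat.prime_of_mem_primeFactors hp
  rw [div_le_iff₀ (pow_pos (Nat.cast_pos.2 hp.pos) _), mul_comm]
  exact sigma_one_prime_pow_le hp _

lemma div_sub_one_sq_le {x : ℝ} (hx : 2 < x) : (x / (x - 1)) ^ 2 ≤ x / (x - 2) := by
  rw [div_pow, div_le_div_iff₀ (by nlinarith) (by linarith)]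
  nlinarith

lemma prod_div_sub_two_le {s : Finset ℕ} {a M : ℕ} (ha : Odd a) (haM : a ≤ M)
    (hs : ∀ p ∈ s, Odd p ∧ a < p ∧ p ≤ M) :
    ∏ p ∈ s, (p / (p - 2) : ℝ) ≤ M / a := by
  have ha0 : (0 : ℝ) < a := by exact_mod_cast ha.pos
  have ha2 := Nat.odd_iff.1 ha
  induction s using Finset.induction_on_max generalizing M with
  | empty =>
    rw [prod_empty, le_div_iff₀ ha0, one_mul]
    exact_mod_cast haM
  | insert m s hlt ih =>
    obtain ⟨hm, ham, hmM⟩ := hs m (mem_insert_self m s)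
    have hm2 := Nat.odd_iff.1 hm
    have ih' := ih (M := m - 2) (by omega) fun p hp ↦ by
      obtain ⟨hpo, hap, -⟩ := hs p (mem_insert_of_mem hp)
      have := Nat.odd_iff.1 hpo
      have := hlt p hp
      exact ⟨hpo, hap, by omega⟩
    have hm2' : (2 : ℝ) < m := by exact_mod_cast (by omega : 2 < m)
    rw [Nat.cast_sub (by omega), Nat.cast_two] at ih'
    rw [prod_insert fun h ↦ (hlt m h).false]
    have hM : (m : ℝ) ≤ M := by exact_mod_cast hmM
    calc (m / (m - 2) : ℝ) * ∏ p ∈ s, (p / (p - 2) : ℝ) ≤ m / (m - 2) * ((m - 2) / a) := by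
          gcongr
      _ = m / a := by field_simp [(by linarith : (m : ℝ) - 2 ≠ 0)]
      _ ≤ M / a := by gcongr

lemma prod_div_sub_one_sq_le {s : Finset ℕ} {a M : ℕ} (ha : Odd a) (haM : a ≤ M)
    (hs : ∀ p ∈ s, Odd p ∧ a < p ∧ p ≤ M) :
    (∏ p ∈ s, (p / (p - 1) : ℝ)) ^ 2 ≤ M / a := by
  rw [← prod_pow]
  refine (prod_le_prod (fun _ _ ↦ by positivity) fun p hp ↦ div_sub_one_sq_le ?_).trans
    (prod_div_sub_two_le ha haM hs)
  obtain ⟨hpo, hap, -⟩ := hs p hp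
  have := Nat.odd_iff.1 ha
  have := Nat.odd_iff.1 hpo
  exact_mod_cast (by omega : 2 < p)

lemma prod_div_sub_one_le_of_le_sixteen {s : Finset ℕ} (hs : ∀ p ∈ s, p.Prime ∧ p ≤ 16) :
    ∏ p ∈ s, (p / (p - 1) : ℝ) ≤ 1001 / 192 := by
  have hsub : s ⊆ ({2, 3, 5, 7, 11, 13} : Finset ℕ) := by
    intro p hp
    obtain ⟨hpp, hp16⟩ := hs p hp
    interval_cases p <;> first | decide | exact absurd hpp (by norm_num)
  calc ∏ p ∈ s, (p / (p - 1) : ℝ) ≤ ∏ p ∈ ({2, 3, 5, 7, 11, 13} : Finset ℕ), (p / (p - 1) : ℝ) := by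
        refine prod_le_prod_of_subset_of_one_le hsub (fun p hp ↦ ?_) fun p hp _ ↦ ?_
        · have : (2 : ℝ) ≤ p := by exact_mod_cast (hs p hp).1.two_le
          exact div_nonneg (by linarith) (by linarith)
        · simp only [mem_insert, mem_singleton] at hp
          rcases hp with rfl | rfl | rfl | rfl | rfl | rfl <;> norm_num
    _ = 1001 / 192 := by norm_num [prod_insert]

lemma pow_le_pow_iff_mul_log_le {x y : ℝ} (hx : 0 < x) (hy : 0 < y) (i j : ℕ) :
    x ^ i ≤ y ^ j ↔ i * log x ≤ j * log y := by
  rw [← log_pow, ← log_pow, log_le_log_iff (by positivity) (by positivity)]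

lemma div_le_log_of_pow_le {k j : ℕ} (hj : 0 < j) {x : ℝ} (hx : 0 < x)
    (h : (2.7182818286 : ℝ) ^ k ≤ x ^ j) : (k / j : ℝ) ≤ log x := by
  have he : exp 1 ^ k ≤ x ^ j :=
    (pow_le_pow_left₀ (exp_pos 1).le exp_one_lt_d9.le k).trans h
  rw [pow_le_pow_iff_mul_log_le (exp_pos 1) hx, log_exp, mul_one] at he
  rw [div_le_iff₀ (by positivity)]
  linarith

/-- `((q + 1) / q) ^ 2 * log (n / p + 2) ≤ log (n + 2)`, exponentiated so as to be decidable. -/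
abbrev PeelsAt (n p q : ℕ) : Prop := (n / p + 2) ^ ((q + 1) ^ 2) ≤ (n + 2) ^ (q ^ 2)

lemma PeelsAt.log_le {n p q : ℕ} (h : PeelsAt n p q) :
    ((q : ℝ) + 1) ^ 2 * log ((n / p : ℕ) + 2) ≤ q ^ 2 * log (n + 2) := by
  have h' : (((n / p : ℕ) : ℝ) + 2) ^ ((q + 1) ^ 2) ≤ ((n : ℝ) + 2) ^ (q ^ 2) := by
    exact_mod_cast h
  exact_mod_cast (pow_le_pow_iff_mul_log_le (by positivity) (by positivity) _ _).1 h'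

lemma abundancy_sq_le_of_peelsAt {n p : ℕ} (hp : p.Prime) (hpn : p ∣ n) (hn : n ≠ 0)
    (h : PeelsAt n p (ordProj[p] n))
    (ih : abundancy (n / p) ^ 2 ≤ 1.44 ^ 2 * log ((n / p : ℕ) + 2)) :
    abundancy n ^ 2 ≤ 1.44 ^ 2 * log ((n : ℝ) + 2) := by
  have hab := abundancy_le_mul_abundancy_div hp hpn hn
  have hlog := h.log_le
  set q := ordProj[p] n
  have hq : (0 : ℝ) < q := by exact_mod_cast Nat.ordProj_pos n p
  have h0 : 0 ≤ abundancy (n / p) := by unfold abundancy; positivity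
  calc abundancy n ^ 2 ≤ (((q + 1) / q : ℝ) * abundancy (n / p)) ^ 2 :=
        pow_le_pow_left₀ (by unfold abundancy; positivity) hab 2
    _ = abundancy (n / p) ^ 2 * ((q + 1) ^ 2 / q ^ 2) := by ring
    _ ≤ 1.44 ^ 2 * log ((n / p : ℕ) + 2) * ((q + 1) ^ 2 / q ^ 2) := by gcongr
    _ = 1.44 ^ 2 * (((q : ℝ) + 1) ^ 2 * log ((n / p : ℕ) + 2)) / q ^ 2 := by ring
    _ ≤ 1.44 ^ 2 * (q ^ 2 * log ((n : ℝ) + 2)) / q ^ 2 := by gcongr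
    _ = 1.44 ^ 2 * log ((n : ℝ) + 2) := by field_simp

lemma mul_log_lt_of_not_peelsAt {n p Q : ℕ} (hp : p.Prime) (hpn : p ∣ n) (hn : n ≠ 0)
    (hQ : Q ≤ ordProj[p] n) (h : ¬ PeelsAt n p (ordProj[p] n)) :
    (Q + 1) * log (p * (Q + 2) / (Q + 2 * p)) < 2 * log (n + 2) := by
  set q := ordProj[p] n
  have hqn : (Q : ℝ) ≤ n := by exact_mod_cast hQ.trans (Nat.ordProj_le p hn)
  have hp1 : (1 : ℝ) ≤ p := by exact_mod_cast hp.one_le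
  have hQ0 : (0 : ℝ) ≤ Q := Nat.cast_nonneg Q
  have hqQ : (Q : ℝ) ≤ q := by exact_mod_cast hQ
  have hlt : (q : ℝ) ^ 2 * log (n + 2) < ((q : ℝ) + 1) ^ 2 * log ((n / p : ℕ) + 2) := by
    have h' : ((n : ℝ) + 2) ^ (q ^ 2) < (((n / p : ℕ) : ℝ) + 2) ^ ((q + 1) ^ 2) := by
      exact_mod_cast not_le.1 h
    have := (pow_le_pow_iff_mul_log_le (by positivity) (by positivity) _ _).not.1 (not_le.2 h')
    push_cast at this
    linarith
  have hD : log (n + 2) - log ((n / p : ℕ) + 2) = log (p * (n + 2) / (n + 2 * p)) := by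
    rw [Nat.cast_div hpn (by positivity), ← log_div (by positivity) (by positivity)]
    congr 1
    field_simp
  have hDQ0 : 0 ≤ log (p * (Q + 2) / (Q + 2 * p)) :=
    log_nonneg (by rw [le_div_iff₀ (by positivity)]; nlinarith)
  have hDQ : log (p * (Q + 2) / (Q + 2 * p)) ≤ log (p * (n + 2) / (n + 2 * p)) := by
    apply log_le_log (by positivity)
    rw [div_le_div_iff₀ (by positivity) (by positivity)]
    nlinarith [mul_nonneg (sub_nonneg.2 hp1) (sub_nonneg.2 hqn)]
  have hL : 0 ≤ log ((n : ℝ) + 2) := log_nonneg (by linarith)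
  have hkey : ((q : ℝ) + 1) * log (p * (n + 2) / (n + 2 * p)) < 2 * log (n + 2) := by
    rw [← hD]
    nlinarith
  calc (Q + 1) * log (p * (Q + 2) / (Q + 2 * p))
      ≤ ((q : ℝ) + 1) * log (p * (n + 2) / (n + 2 * p)) :=
        mul_le_mul (by linarith) hDQ hDQ0 (by positivity)
    _ < 2 * log (n + 2) := hkey

lemma ordProj_dvd_of_not_peelsAt {n p k : ℕ} (hp : p.Prime) (hn : n ≠ 0)
    (h : p ∣ n → ¬ PeelsAt n p (ordProj[p] n))
    (hk : 2 * log ((n : ℝ) + 2) ≤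
      ((p : ℝ) ^ (k + 1) + 1) * log (p * (p ^ (k + 1) + 2) / (p ^ (k + 1) + 2 * p))) :
    ordProj[p] n ∣ p ^ k := by
  by_cases hpn : p ∣ n
  · have hlt : ordProj[p] n < p ^ (k + 1) := by
      by_contra hle
      have := mul_log_lt_of_not_peelsAt hp hpn hn (not_lt.1 hle) (h hpn)
      push_cast at this
      linarith
    exact pow_dvd_pow p (Nat.lt_succ_iff.1 ((Nat.pow_lt_pow_iff_right hp.one_lt).1 hlt))
  · rw [Nat.factorization_eq_zero_of_not_dvd hpn, pow_zero]
    exact one_dvd _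

lemma abundancy_sq_le_of_large_prime {n P : ℕ} (hn : n ≠ 0) (hP : P ∈ n.primeFactors)
    (h17 : 17 ≤ P) (hmax : ∀ p ∈ n.primeFactors, p ≤ P) (h : ¬ PeelsAt n P (ordProj[P] n)) :
    abundancy n ^ 2 ≤ 1.44 ^ 2 * log ((n : ℝ) + 2) := by
  have hPp := Nat.prime_of_mem_primeFactors hP
  have hPn := Nat.dvd_of_mem_primeFactors hP
  have hPq : P ≤ ordProj[P] n := by
    calc P = P ^ 1 := (pow_one P).symm
      _ ≤ ordProj[P] n := Nat.pow_le_pow_right hPp.pos (hPp.factorization_pos_of_dvd hn hPn)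
  have hP17 : (17 : ℝ) ≤ P := by exact_mod_cast h17
  have hlog : (9 / 5 : ℝ) ≤ log (P * (P + 2) / (P + 2 * P)) := by
    have h19 : (19 / 3 : ℝ) ≤ P * (P + 2) / (P + 2 * P) := by
      rw [le_div_iff₀ (by positivity)]; nlinarith
    have := div_le_log_of_pow_le (k := 9) (j := 5) (x := 19 / 3) (by norm_num) (by norm_num)
      (by norm_num)
    exact le_trans (by exact_mod_cast this) (log_le_log (by norm_num) h19)
  have hL := mul_log_lt_of_not_peelsAt hPp hPn hn hPq h
  have hR := abundancy_le_prod_primeFactors hn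
  rw [← prod_filter_mul_prod_filter_not n.primeFactors (· ≤ 16)] at hR
  set A := ∏ p ∈ n.primeFactors.filter (· ≤ 16), (p / (p - 1) : ℝ)
  set B := ∏ p ∈ n.primeFactors.filter (¬ · ≤ 16), (p / (p - 1) : ℝ)
  have hA : A ≤ 1001 / 192 := prod_div_sub_one_le_of_le_sixteen fun p hp ↦ by
    rw [mem_filter] at hp; exact ⟨Nat.prime_of_mem_primeFactors hp.1, hp.2⟩
  have hB : B ^ 2 ≤ P / 15 := by
    refine prod_div_sub_one_sq_le (a := 15) (M := P) (by decide) (by omega) fun p hp ↦ ?_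
    rw [mem_filter] at hp
    exact ⟨(Nat.prime_of_mem_primeFactors hp.1).odd_of_ne_two (by omega), by omega, hmax p hp.1⟩
  have hA0 : 0 ≤ A := prod_nonneg fun p hp ↦ by
    have : (1 : ℝ) ≤ p := by
      exact_mod_cast (Nat.prime_of_mem_primeFactors (mem_filter.1 hp).1).one_le
    exact div_nonneg (by linarith) (by linarith)
  have hab0 : 0 ≤ abundancy n := by unfold abundancy; positivity
  calc abundancy n ^ 2 ≤ A ^ 2 * B ^ 2 := by rw [← mul_pow]; gcongr
    _ ≤ (1001 / 192) ^ 2 * (P / 15 : ℝ) := by gcongr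
    _ ≤ 1.44 ^ 2 * log ((n : ℝ) + 2) := by nlinarith

lemma mem_primeFactors_of_one_lt_ordProj {n p : ℕ} (h : 1 < ordProj[p] n) :
    p ∈ n.primeFactors := by
  rw [← Nat.support_factorization, Finsupp.mem_support_iff]
  intro h0
  rw [h0, pow_zero] at h
  exact lt_irrefl 1 h

lemma prod_ordProj_eq_self {n : ℕ} (hn : n ≠ 0) {s : Finset ℕ} (h : n.primeFactors ⊆ s) :
    ∏ p ∈ s, ordProj[p] n = n := by
  conv_rhs => rw [← Nat.prod_factorization_pow_eq_self hn]
  exact (Finsupp.prod_of_support_subset _ (by rwa [Nat.support_factorization]) _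
    fun p _ ↦ pow_zero p).symm

-- `a, …, f` range over the possible `2`-, …, `13`-parts of `n`; checked by kernel evaluation.
lemma mem_exceptions_or_peelsAt :
    ∀ a ∈ Nat.divisors 32, ∀ b ∈ Nat.divisors 9, ∀ c ∈ Nat.divisors 5, ∀ d ∈ Nat.divisors 7,
    ∀ e ∈ Nat.divisors 11, ∀ f ∈ Nat.divisors 13,
    let n := a * b * c * d * e * f
    n ∈ ({1, 2, 3, 4, 6, 12, 24, 360, 720, 5040} : Finset ℕ) ∨
      (1 < f ∧ PeelsAt n 13 f) ∨ (1 < e ∧ PeelsAt n 11 e) ∨ (1 < d ∧ PeelsAt n 7 d) ∨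
      (1 < c ∧ PeelsAt n 5 c) ∨ (1 < b ∧ PeelsAt n 3 b) ∨ (1 < a ∧ PeelsAt n 2 a) := by
  decide +kernel

lemma abundancy_sq_le_of_sigma_eq {n s k j : ℕ} (hσ : σ 1 n = s)
    (h : 0 < j ∧ (2.7182818286 : ℝ) ^ k ≤ ((n : ℝ) + 2) ^ j ∧
      ((s : ℝ) / n) ^ 2 ≤ 1.44 ^ 2 * (k / j)) :
    abundancy n ^ 2 ≤ 1.44 ^ 2 * log ((n : ℝ) + 2) := by
  obtain ⟨hj, he, h⟩ := h
  rw [abundancy, hσ]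
  exact h.trans (by gcongr; exact div_le_log_of_pow_le hj (by positivity) he)

lemma abundancy_sq_le_of_mem_exceptions {n : ℕ}
    (hn : n ∈ ({1, 2, 3, 4, 6, 12, 24, 360, 720, 5040} : Finset ℕ)) :
    abundancy n ^ 2 ≤ 1.44 ^ 2 * log ((n : ℝ) + 2) := by
  simp only [mem_insert, mem_singleton] at hn
  -- The margin is smallest at `n = 12`: `(28 / 12 / 1.44) ^ 2 ≈ 2.6255 ≤ 29 / 11 ≤ log 14`.
  rcases hn with rfl | rfl | rfl | rfl | rfl | rfl | rfl | rfl | rfl | rfl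
  · exact abundancy_sq_le_of_sigma_eq (s := 1) (k := 1) (j := 2) (by decide +kernel) (by norm_num)
  · exact abundancy_sq_le_of_sigma_eq (s := 3) (k := 5) (j := 4) (by decide +kernel) (by norm_num)
  · exact abundancy_sq_le_of_sigma_eq (s := 4) (k := 1) (j := 1) (by decide +kernel) (by norm_num)
  · exact abundancy_sq_le_of_sigma_eq (s := 7) (k := 3) (j := 2) (by decide +kernel) (by norm_num)
  · exact abundancy_sq_le_of_sigma_eq (s := 12) (k := 2) (j := 1) (by decide +kernel) (by norm_num)
  · exact abundancy_sq_le_of_sigma_eq (s := 28) (k := 29) (j := 11) (by decide +kernel)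
      (by norm_num)
  · exact abundancy_sq_le_of_sigma_eq (s := 60) (k := 16) (j := 5) (by decide +kernel) (by norm_num)
  · exact abundancy_sq_le_of_sigma_eq (s := 1170) (k := 11) (j := 2) (by decide +kernel)
      (by norm_num)
  · exact abundancy_sq_le_of_sigma_eq (s := 2418) (k := 6) (j := 1) (by decide +kernel)
      (by norm_num)
  · exact abundancy_sq_le_of_sigma_eq (s := 19344) (k := 8) (j := 1) (by decide +kernel)
      (by norm_num)

lemma ordProj_dvd_of_forall_not_peelsAt {n : ℕ} (hn : n ≠ 0)
    (hL : 1.44 ^ 2 * log ((n : ℝ) + 2) < (1001 / 192) ^ 2)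
    (h : ∀ p ∈ n.primeFactors, ¬ PeelsAt n p (ordProj[p] n)) :
    ordProj[2] n ∣ 2 ^ 5 ∧ ordProj[3] n ∣ 3 ^ 2 ∧ ∀ p, p.Prime → 5 ≤ p → ordProj[p] n ∣ p := by
  have hpeel {p : ℕ} (hp : p.Prime) : p ∣ n → ¬ PeelsAt n p (ordProj[p] n) :=
    fun hpn ↦ h p (Nat.mem_primeFactors.2 ⟨hp, hpn, hn⟩)
  refine ⟨?_, ?_, fun p hp hp5 ↦ ?_⟩
  · refine ordProj_dvd_of_not_peelsAt Nat.prime_two hn (hpeel Nat.prime_two) ?_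
    have := div_le_log_of_pow_le (k := 1) (j := 2) (x := 2 * (2 ^ 6 + 2) / (2 ^ 6 + 2 * 2))
      (by norm_num) (by norm_num) (by norm_num)
    norm_num at this ⊢
    linarith
  · refine ordProj_dvd_of_not_peelsAt Nat.prime_three hn (hpeel Nat.prime_three) ?_
    have := div_le_log_of_pow_le (k := 19) (j := 20) (x := 3 * (3 ^ 3 + 2) / (3 ^ 3 + 2 * 3))
      (by norm_num) (by norm_num) (by norm_num)
    norm_num at this ⊢
    linarith
  · suffices ordProj[p] n ∣ p ^ 1 by rwa [pow_one] at this
    refine ordProj_dvd_of_not_peelsAt hp hn (hpeel hp) ?_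
    have hp5' : (5 : ℝ) ≤ p := by exact_mod_cast hp5
    have h27 : (27 / 7 : ℝ) ≤ p * (p ^ (1 + 1) + 2) / (p ^ (1 + 1) + 2 * p) := by
      rw [le_div_iff₀ (by positivity)]; nlinarith
    have := div_le_log_of_pow_le (k := 13) (j := 10) (x := 27 / 7)
      (by norm_num) (by norm_num) (by norm_num)
    have hlog : (13 / 10 : ℝ) ≤ log (p * (p ^ (1 + 1) + 2) / (p ^ (1 + 1) + 2 * p)) :=
      le_trans (by exact_mod_cast this) (log_le_log (by norm_num) h27)
    nlinarith

lemma abundancy_sq_le_of_smooth {n : ℕ} (hn : n ≠ 0) (hsmall : ∀ p ∈ n.primeFactors, p ≤ 16)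
    (h : ∀ p ∈ n.primeFactors, ¬ PeelsAt n p (ordProj[p] n)) :
    abundancy n ^ 2 ≤ 1.44 ^ 2 * log ((n : ℝ) + 2) := by
  have hab0 : 0 ≤ abundancy n := by unfold abundancy; positivity
  have hR : abundancy n ≤ 1001 / 192 :=
    (abundancy_le_prod_primeFactors hn).trans (prod_div_sub_one_le_of_le_sixteen fun p hp ↦
      ⟨Nat.prime_of_mem_primeFactors hp, hsmall p hp⟩)
  by_cases hL : (1001 / 192) ^ 2 ≤ 1.44 ^ 2 * log ((n : ℝ) + 2)
  · nlinarith
  obtain ⟨h2, h3, h5⟩ := ordProj_dvd_of_forall_not_peelsAt hn (not_le.1 hL) h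
  have hsub : n.primeFactors ⊆ ({2, 3, 5, 7, 11, 13} : Finset ℕ) := by
    intro p hp
    have hpp := Nat.prime_of_mem_primeFactors hp
    have := hsmall p hp
    interval_cases p <;> first | decide | exact absurd hpp (by norm_num)
  have hprod := prod_ordProj_eq_self hn hsub
  rw [prod_insert (by decide), prod_insert (by decide), prod_insert (by decide),
    prod_insert (by decide), prod_insert (by decide), prod_singleton] at hprod
  simp only [← mul_assoc] at hprod
  have := mem_exceptions_or_peelsAt _ (Nat.mem_divisors.2 ⟨h2, by norm_num⟩)
    _ (Nat.mem_divisors.2 ⟨h3, by norm_num⟩)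
    _ (Nat.mem_divisors.2 ⟨h5 5 (by norm_num) le_rfl, by norm_num⟩)
    _ (Nat.mem_divisors.2 ⟨h5 7 (by norm_num) (by norm_num), by norm_num⟩)
    _ (Nat.mem_divisors.2 ⟨h5 11 (by norm_num) (by norm_num), by norm_num⟩)
    _ (Nat.mem_divisors.2 ⟨h5 13 (by norm_num) (by norm_num), by norm_num⟩)
  simp only [hprod] at this
  rcases this with hE | ⟨h1, hp⟩ | ⟨h1, hp⟩ | ⟨h1, hp⟩ | ⟨h1, hp⟩ | ⟨h1, hp⟩ | ⟨h1, hp⟩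
  · exact abundancy_sq_le_of_mem_exceptions hE
  all_goals exact absurd hp (h _ (mem_primeFactors_of_one_lt_ordProj h1))

theorem abundancy_sq_le {n : ℕ} (hn : n ≠ 0) :
    abundancy n ^ 2 ≤ 1.44 ^ 2 * log ((n : ℝ) + 2) := by
  induction n using Nat.strong_induction_on with
  | _ n ih =>
  by_cases hpeel : ∃ p ∈ n.primeFactors, PeelsAt n p (ordProj[p] n)
  · obtain ⟨p, hp, h⟩ := hpeel
    have hp' := Nat.prime_of_mem_primeFactors hp
    have hpn := Nat.dvd_of_mem_primeFactors hp
    exact abundancy_sq_le_of_peelsAt hp' hpn hn h <|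
      ih _ (Nat.div_lt_self (Nat.pos_of_ne_zero hn) hp'.one_lt)
        (Nat.div_ne_zero_iff_of_dvd hpn |>.2 ⟨hn, hp'.ne_zero⟩)
  simp only [not_exists, not_and] at hpeel
  by_cases hlarge : ∃ p ∈ n.primeFactors, 17 ≤ p
  · obtain ⟨p, hp, h17⟩ := hlarge
    have hne : n.primeFactors.Nonempty := ⟨p, hp⟩
    exact abundancy_sq_le_of_large_prime hn (max'_mem _ hne) (h17.trans (le_max' _ p hp))
      (fun q hq ↦ le_max' _ q hq) (hpeel _ (max'_mem _ hne))
  · exact abundancy_sq_le_of_smooth hn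
      (fun p hp ↦ by by_contra; exact hlarge ⟨p, hp, by omega⟩) hpeel

theorem sigma_le (n : ℕ) (hn : 0 < n) :
    ((∑ d ∈ n.divisors, d : ℕ) : ℝ) ≤ 1.44 * n * Real.sqrt (Real.log (n + 2)) := by
  have hn' : (0 : ℝ) < n := by exact_mod_cast hn
  have h : abundancy n ≤ 1.44 * √(log (n + 2)) := by
    rw [← sqrt_sq (by norm_num : (0 : ℝ) ≤ 1.44), ← sqrt_mul (by norm_num)]
    exact (le_abs_self _).trans (abs_le_sqrt (abundancy_sq_le hn.ne'))
  rw [abundancy, div_le_iff₀ hn'] at h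
  rw [← ArithmeticFunction.sigma_one_apply]
  linarith
end

section
/- If 24m + 9 = X² + 2Y² + 6Z² for integers X, Y, Z and m ≥ 0, then after replacing X, Y, Z by suitable sign changes, there exist integers x, y, z with X = 4z+1, Y = 3y+z+1, and Z = 2x+y+z+1. -/
lemma build_aux (X Y Z : ℤ) (h4 : X % 4 = 1) (h3 : (X - Y) % 3 = 0)
    (h2 : (Y - Z) % 2 = 0) :
    ∃ x y z : ℤ, X = 4 * z + 1 ∧ Y = 3 * y + z + 1 ∧ Z = 2 * x + y + z + 1 := by
  obtain ⟨z, hz⟩ : ∃ z, X = 4 * z + 1 := ⟨(X - 1) / 4, by omega⟩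
  obtain ⟨y, hy⟩ : ∃ y, Y = 3 * y + z + 1 := ⟨(Y - z - 1) / 3, by omega⟩
  obtain ⟨x, hx⟩ : ∃ x, Z = 2 * x + y + z + 1 := ⟨(Z - y - z - 1) / 2, by omega⟩
  exact ⟨x, y, z, hz, hy, hx⟩

theorem sign_normalization (X Y Z m : ℤ) (hm : 0 ≤ m)
    (h : 24 * m + 9 = X ^ 2 + 2 * Y ^ 2 + 6 * Z ^ 2) :
    ∃ εX εY εZ : ℤ, (εX = 1 ∨ εX = -1) ∧ (εY = 1 ∨ εY = -1) ∧ (εZ = 1 ∨ εZ = -1) ∧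
      ∃ x y z : ℤ, εX * X = 4 * z + 1 ∧ εY * Y = 3 * y + z + 1 ∧
        εZ * Z = 2 * x + y + z + 1 := by
  -- Step 1: X is odd
  have hX2 : X % 2 = 1 := by
    rcases Int.even_or_odd X with ⟨a, ha⟩ | ⟨a, ha⟩
    · exfalso
      obtain ⟨A, B, C, h'⟩ : ∃ A B C : ℤ, 24 * m + 9 = 4 * A + 2 * B + 6 * C :=
        ⟨a * a, Y * Y, Z * Z, by subst ha; linear_combination h⟩
      omega
    · omega
  -- Step 2: Y ≡ Z (mod 2)
  have hYZ : (Y - Z) % 2 = 0 := by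
    obtain ⟨a, ha⟩ : ∃ a, X = 2 * a + 1 := ⟨X / 2, by omega⟩
    obtain ⟨d, hd⟩ := Int.even_mul_succ_self a
    rcases Int.even_or_odd Y with ⟨b, hb⟩ | ⟨b, hb⟩ <;>
      rcases Int.even_or_odd Z with ⟨c, hc⟩ | ⟨c, hc⟩
    · omega
    · exfalso
      obtain ⟨D, B, C, h'⟩ : ∃ D B C : ℤ,
          24 * m + 9 = 8 * D + 1 + 8 * B + 24 * C + 24 * c + 6 :=
        ⟨d, b * b, c * c, by subst ha hb hc; linear_combination h + 4 * hd⟩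
      omega
    · exfalso
      obtain ⟨D, B, C, h'⟩ : ∃ D B C : ℤ,
          24 * m + 9 = 8 * D + 1 + 8 * B + 8 * b + 2 + 24 * C :=
        ⟨d, b * b, c * c, by subst ha hb hc; linear_combination h + 4 * hd⟩
      omega
    · omega
  -- Step 3: X ≡ ± Y (mod 3)
  have h3 : (X - Y) % 3 = 0 ∨ (X + Y) % 3 = 0 := by
    have hr : X % 3 = 0 ∨ X % 3 = 1 ∨ X % 3 = 2 := by omega
    have hs : Y % 3 = 0 ∨ Y % 3 = 1 ∨ Y % 3 = 2 := by omega
    rcases hr with hr | hr | hr <;> rcases hs with hs | hs | hs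
    · omega
    · exfalso
      obtain ⟨a, ha⟩ : ∃ a, X = 3 * a := ⟨X / 3, by omega⟩
      obtain ⟨b, hb⟩ : ∃ b, Y = 3 * b + 1 := ⟨Y / 3, by omega⟩
      obtain ⟨A, B, C, h'⟩ : ∃ A B C : ℤ,
          24 * m + 9 = 9 * A + 18 * B + 12 * b + 2 + 6 * C :=
        ⟨a * a, b * b, Z * Z, by subst ha hb; linear_combination h⟩
      omega
    · exfalso
      obtain ⟨a, ha⟩ : ∃ a, X = 3 * a := ⟨X / 3, by omega⟩
      obtain ⟨b, hb⟩ : ∃ b, Y = 3 * b + 2 := ⟨Y / 3, by omega⟩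
      obtain ⟨A, B, C, h'⟩ : ∃ A B C : ℤ,
          24 * m + 9 = 9 * A + 18 * B + 24 * b + 8 + 6 * C :=
        ⟨a * a, b * b, Z * Z, by subst ha hb; linear_combination h⟩
      omega
    · exfalso
      obtain ⟨a, ha⟩ : ∃ a, X = 3 * a + 1 := ⟨X / 3, by omega⟩
      obtain ⟨b, hb⟩ : ∃ b, Y = 3 * b := ⟨Y / 3, by omega⟩
      obtain ⟨A, B, C, h'⟩ : ∃ A B C : ℤ,
          24 * m + 9 = 9 * A + 6 * a + 1 + 18 * B + 6 * C :=
        ⟨a * a, b * b, Z * Z, by subst ha hb; linear_combination h⟩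
      omega
    · omega
    · omega
    · exfalso
      obtain ⟨a, ha⟩ : ∃ a, X = 3 * a + 2 := ⟨X / 3, by omega⟩
      obtain ⟨b, hb⟩ : ∃ b, Y = 3 * b := ⟨Y / 3, by omega⟩
      obtain ⟨A, B, C, h'⟩ : ∃ A B C : ℤ,
          24 * m + 9 = 9 * A + 12 * a + 4 + 18 * B + 6 * C :=
        ⟨a * a, b * b, Z * Z, by subst ha hb; linear_combination h⟩
      omega
    · omega
    · omega
  -- Final construction
  have h4 : X % 4 = 1 ∨ X % 4 = 3 := by omega
  rcases h4 with h4 | h4 <;> rcases h3 with h3 | h3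
  · obtain ⟨x, y, z, e1, e2, e3⟩ := build_aux X Y Z h4 h3 hYZ
    exact ⟨1, 1, 1, Or.inl rfl, Or.inl rfl, Or.inl rfl, x, y, z,
      by omega, by omega, by omega⟩
  · obtain ⟨x, y, z, e1, e2, e3⟩ :=
      build_aux X (-Y) Z h4 (by omega) (by omega)
    exact ⟨1, -1, 1, Or.inl rfl, Or.inr rfl, Or.inl rfl, x, y, z,
      by omega, by omega, by omega⟩
  · obtain ⟨x, y, z, e1, e2, e3⟩ :=
      build_aux (-X) (-Y) Z (by omega) (by omega) (by omega)
    exact ⟨-1, -1, 1, Or.inr rfl, Or.inr rfl, Or.inl rfl, x, y, z,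
      by omega, by omega, by omega⟩
  · obtain ⟨x, y, z, e1, e2, e3⟩ :=
      build_aux (-X) Y Z (by omega) (by omega) (by omega)
    exact ⟨-1, 1, 1, Or.inr rfl, Or.inl rfl, Or.inl rfl, x, y, z,
      by omega, by omega, by omega⟩
end

section
/- No integer of the form n = 4^k(16ℓ + 14), with k, ℓ nonnegative integers, is represented by the ternary quadratic form T(x,y,z) = x² + xy + xz + y² + yz + z² over the integers. -/
lemma tern_base : ∀ a b c : ZMod 16,
    a ^ 2 + a * b + a * c + b ^ 2 + b * c + c ^ 2 ≠ 14 := by decide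

lemma tern_step : ∀ a b c : ZMod 4,
    a ^ 2 + a * b + a * c + b ^ 2 + b * c + c ^ 2 = 0 →
    (ZMod.castHom (by norm_num : (2:ℕ) ∣ 4) (ZMod 2)) a = 0 ∧
    (ZMod.castHom (by norm_num : (2:ℕ) ∣ 4) (ZMod 2)) b = 0 ∧
    (ZMod.castHom (by norm_num : (2:ℕ) ∣ 4) (ZMod 2)) c = 0 := by decide

theorem ternary_exceptions (k l : ℕ) :
    ¬ ∃ x y z : ℤ,
      x ^ 2 + x * y + x * z + y ^ 2 + y * z + z ^ 2 = 4 ^ k * (16 * l + 14) := by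
  induction k generalizing l with
  | zero =>
    rintro ⟨x, y, z, h⟩
    have h16 : ((x:ZMod 16) ^ 2 + x * y + x * z + y ^ 2 + y * z + z ^ 2 : ZMod 16) = 14 := by
      have := congrArg (Int.cast : ℤ → ZMod 16) h
      push_cast at this
      have h0 : (16 : ZMod 16) * (l:ZMod 16) = 0 := by
        rw [show (16:ZMod 16) = 0 from by decide]; ring
      linear_combination this + h0
    exact tern_base x y z (by linear_combination h16)
  | succ k ih =>
    rintro ⟨x, y, z, h⟩
    have h4 : ((x:ZMod 4) ^ 2 + x * y + x * z + y ^ 2 + y * z + z ^ 2 : ZMod 4) = 0 := by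
      have := congrArg (Int.cast : ℤ → ZMod 4) h
      push_cast at this
      rw [this, pow_succ]
      simp [show ((4:ZMod 4)) = 0 from by decide]
    obtain ⟨hx, hy, hz⟩ := tern_step x y z (by linear_combination h4)
    rw [map_intCast] at hx hy hz
    obtain ⟨a, rfl⟩ := (ZMod.intCast_zmod_eq_zero_iff_dvd x 2).mp hx
    obtain ⟨b, rfl⟩ := (ZMod.intCast_zmod_eq_zero_iff_dvd y 2).mp hy
    obtain ⟨c, rfl⟩ := (ZMod.intCast_zmod_eq_zero_iff_dvd z 2).mp hz
    refine ih l ⟨a, b, c, ?_⟩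
    have h4' : (4:ℤ) * (a ^ 2 + a * b + a * c + b ^ 2 + b * c + c ^ 2) =
        4 * (4 ^ k * (16 * l + 14)) := by
      push_cast [pow_succ] at h ⊢
      linarith [h]
    exact mul_left_cancel₀ (by norm_num : (4:ℤ) ≠ 0) h4'
end

section
/- Let a₁, a₂, a₃, a₄ be positive reals with a₁a₂a₃a₄ = p/16 for some p > 0, with a₁ ≥ 1 and a_{i+1} ≥ (3/4)a_i for i = 1, 2, 3. Then a₁ ≤ (4/(3√3)) p^{1/4}, a₂ ≤ (2^{2/3}/3) p^{1/3}, a₄ ≥ (3√3/16) p^{1/4}, and √(a₁a₂a₃) ≤ 3^{-3/4} p^{3/8}. -/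
set_option maxHeartbeats 1600000 in
theorem reduced_coeff_bounds (p a₁ a₂ a₃ a₄ : ℝ) (hp : 0 < p)
    (h1 : 0 < a₁) (h2 : 0 < a₂) (h3 : 0 < a₃) (h4 : 0 < a₄)
    (hprod : a₁ * a₂ * a₃ * a₄ = p / 16) (ha₁ : 1 ≤ a₁)
    (h12 : (3 / 4) * a₁ ≤ a₂) (h23 : (3 / 4) * a₂ ≤ a₃) (h34 : (3 / 4) * a₃ ≤ a₄) :
    a₁ ≤ (4 / (3 * Real.sqrt 3)) * p ^ ((1 : ℝ) / 4) ∧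
    a₂ ≤ ((2 : ℝ) ^ ((2 : ℝ) / 3) / 3) * p ^ ((1 : ℝ) / 3) ∧
    (3 * Real.sqrt 3 / 16) * p ^ ((1 : ℝ) / 4) ≤ a₄ ∧
    Real.sqrt (a₁ * a₂ * a₃) ≤ (3 : ℝ) ^ (-(3 : ℝ) / 4) * p ^ ((3 : ℝ) / 8) := by
  have hs3 : Real.sqrt 3 ^ 2 = 3 := Real.sq_sqrt (by norm_num)
  have hs3pos : 0 < Real.sqrt 3 := Real.sqrt_pos.mpr (by norm_num)
  set q := p ^ ((1 : ℝ) / 4) with hq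
  have hqpos : 0 < q := Real.rpow_pos_of_pos hp _
  have hq4 : q ^ 4 = p := by
    rw [hq, ← Real.rpow_natCast (p ^ ((1:ℝ)/4)) 4, ← Real.rpow_mul hp.le]
    norm_num
  set s := p ^ ((1 : ℝ) / 3) with hsdef
  have hspos : 0 < s := Real.rpow_pos_of_pos hp _
  have hs3' : s ^ 3 = p := by
    rw [hsdef, ← Real.rpow_natCast (p ^ ((1:ℝ)/3)) 3, ← Real.rpow_mul hp.le]
    norm_num
  set r := p ^ ((3 : ℝ) / 8) with hrdef
  have hrpos : 0 < r := Real.rpow_pos_of_pos hp _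
  have hr2 : r ^ 2 = q ^ 3 := by
    rw [hrdef, hq, ← Real.rpow_natCast (p ^ ((3:ℝ)/8)) 2, ← Real.rpow_mul hp.le,
      ← Real.rpow_natCast (p ^ ((1:ℝ)/4)) 3, ← Real.rpow_mul hp.le]
    norm_num
  -- a₄ lower bound
  have ha4 : (3 * Real.sqrt 3 / 16) * q ≤ a₄ := by
    have h4pow : (3 * Real.sqrt 3 / 16 * q) ^ 4 ≤ a₄ ^ 4 := by
      have e : (3 * Real.sqrt 3 / 16 * q) ^ 4 = 729 / 65536 * q ^ 4 := by
        have : Real.sqrt 3 ^ 4 = 9 := by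
          rw [show (4:ℕ) = 2 * 2 from rfl, pow_mul, hs3]; norm_num
        ring_nf
        nlinarith [this]
      rw [e, hq4]
      have b3 : a₃ ≤ 4/3 * a₄ := by linarith
      have b2 : a₂ ≤ 16/9 * a₄ := by linarith
      have b1 : a₁ ≤ 64/27 * a₄ := by linarith
      have m : a₁ * a₂ * a₃ * a₄ ≤ (64/27 * a₄) * (16/9 * a₄) * (4/3 * a₄) * a₄ := by
        gcongr <;> positivity
      nlinarith [m]
    exact le_of_pow_le_pow_left₀ (by norm_num) h4.le h4pow
  have ha1 : a₁ ≤ (4 / (3 * Real.sqrt 3)) * q := by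
    have h1pow : a₁ ^ 4 ≤ (4 / (3 * Real.sqrt 3) * q) ^ 4 := by
      have e : (4 / (3 * Real.sqrt 3) * q) ^ 4 = 256 / 729 * q ^ 4 := by
        have h9 : Real.sqrt 3 ^ 4 = 9 := by
          rw [show (4:ℕ) = 2 * 2 from rfl, pow_mul, hs3]; norm_num
        field_simp
        nlinarith [h9, hqpos]
      rw [e, hq4]
      have e2 : 9/16 * a₁ ≤ a₃ := by linarith
      have e3 : 27/64 * a₁ ≤ a₄ := by linarith
      have m : a₁ * (3/4 * a₁) * (9/16 * a₁) * (27/64 * a₁) ≤ a₁ * a₂ * a₃ * a₄ := by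
        gcongr <;> positivity
      nlinarith [m]
    exact le_of_pow_le_pow_left₀ (by norm_num) (by positivity) h1pow
  have ha2 : a₂ ≤ ((2 : ℝ) ^ ((2 : ℝ) / 3) / 3) * s := by
    have hc : ((2:ℝ) ^ ((2:ℝ)/3)) ^ 3 = 4 := by
      rw [← Real.rpow_natCast ((2:ℝ) ^ ((2:ℝ)/3)) 3, ← Real.rpow_mul (by norm_num : (0:ℝ) ≤ 2)]
      norm_num
    have h2pow : a₂ ^ 3 ≤ (((2:ℝ) ^ ((2:ℝ)/3) / 3) * s) ^ 3 := by
      have e : (((2:ℝ) ^ ((2:ℝ)/3) / 3) * s) ^ 3 = 4 / 27 * s ^ 3 := by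
        field_simp
        nlinarith [hc, hspos]
      rw [e, hs3']
      have e2 : 9/16 * a₂ ≤ a₄ := by linarith
      have m : 1 * a₂ * (3/4 * a₂) * (9/16 * a₂) ≤ a₁ * a₂ * a₃ * a₄ := by
        gcongr <;> positivity
      nlinarith [m]
    exact le_of_pow_le_pow_left₀ (by norm_num) (by positivity) h2pow
  refine ⟨ha1, ha2, ha4, ?_⟩
  -- last bound
  have hR : ((3:ℝ) ^ (-(3:ℝ)/4) * r) ^ 2 = q ^ 3 / (3 * Real.sqrt 3) := by
    have h32 : ((3:ℝ) ^ (-(3:ℝ)/4)) ^ 2 = (3 * Real.sqrt 3)⁻¹ := by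
      rw [← Real.rpow_natCast ((3:ℝ) ^ (-(3:ℝ)/4)) 2, ← Real.rpow_mul (by norm_num : (0:ℝ) ≤ 3)]
      rw [show (-(3:ℝ)/4) * (2:ℕ) = -(3/2) by push_cast; ring, Real.rpow_neg (by norm_num)]
      congr 1
      rw [show (3:ℝ)/2 = 1 + 1/2 by norm_num, Real.rpow_add (by norm_num), Real.rpow_one,
        ← Real.sqrt_eq_rpow]
    rw [mul_pow, h32, hr2]
    field_simp
  have hmul : a₁ * a₂ * a₃ * ((3 * Real.sqrt 3 / 16) * q) ≤ a₁ * a₂ * a₃ * a₄ :=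
    mul_le_mul_of_nonneg_left ha4 (by positivity)
  have hkey : 3 * Real.sqrt 3 * (a₁ * a₂ * a₃) ≤ q ^ 3 := by
    have h2' : 3 * Real.sqrt 3 * (a₁ * a₂ * a₃) * q ≤ q ^ 3 * q := by nlinarith [hq4]
    exact le_of_mul_le_mul_right h2' hqpos
  have hle : a₁ * a₂ * a₃ ≤ ((3:ℝ) ^ (-(3:ℝ)/4) * r) ^ 2 := by
    rw [hR, le_div_iff₀ (by positivity)]
    linarith [hkey]
  calc Real.sqrt (a₁ * a₂ * a₃) ≤ Real.sqrt (((3:ℝ) ^ (-(3:ℝ)/4) * r) ^ 2) :=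
        Real.sqrt_le_sqrt hle
    _ = (3:ℝ) ^ (-(3:ℝ)/4) * r := Real.sqrt_sq (by positivity)
end

section
/- Let a₁*, a₂*, a₃*, a₄* be positive reals with a₁* a₂* a₃* a₄* = p³/16 for p > 0, satisfying a₁* ≥ (3/4)a₂* ≥ (9/16)a₃* ≥ (27/64)a₄* and a₁* ≤ p/4, a₂* ≤ p/3. Then a₁* ≥ (9/4^{8/3}) p^{3/4}, a₂* ≥ (3/4^{4/3}) p^{2/3}, and a₃* ≥ (3/4)√p. -/
set_option maxHeartbeats 1000000 in
theorem dual_coeff_bounds (p a₁ a₂ a₃ a₄ : ℝ) (hp : 0 < p)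
    (h1 : 0 < a₁) (h2 : 0 < a₂) (h3 : 0 < a₃) (h4 : 0 < a₄)
    (hprod : a₁ * a₂ * a₃ * a₄ = p ^ 3 / 16)
    (h12 : (3 / 4) * a₂ ≤ a₁) (h23 : (9 / 16) * a₃ ≤ (3 / 4) * a₂)
    (h34 : (27 / 64) * a₄ ≤ (9 / 16) * a₃)
    (hb1 : a₁ ≤ p / 4) (hb2 : a₂ ≤ p / 3) :
    (9 / 4 ^ ((8 : ℝ) / 3)) * p ^ ((3 : ℝ) / 4) ≤ a₁ ∧
    (3 / 4 ^ ((4 : ℝ) / 3)) * p ^ ((2 : ℝ) / 3) ≤ a₂ ∧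
    (3 / 4) * Real.sqrt p ≤ a₃ := by
  have ha2 : a₂ ≤ 4/3 * a₁ := by linarith
  have ha3 : a₃ ≤ 4/3 * a₂ := by linarith
  have ha4 : a₄ ≤ 4/3 * a₃ := by linarith
  have ha3' : a₃ ≤ 16/9 * a₁ := by linarith
  have ha4' : a₄ ≤ 64/27 * a₁ := by linarith
  have ha4'' : a₄ ≤ 16/9 * a₂ := by linarith
  -- bound for a₃
  have k3 : p^3/16 ≤ (p/4) * (p/3) * a₃ * (4/3 * a₃) := by
    rw [← hprod]; gcongr
  have e3 : (9:ℝ)/16 * p ≤ a₃^2 := by nlinarith [mul_pos hp hp]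
  have hs : ((3:ℝ)/4 * Real.sqrt p)^2 ≤ a₃^2 := by
    rw [mul_pow, Real.sq_sqrt hp.le]; nlinarith
  have goal3 : (3:ℝ)/4 * Real.sqrt p ≤ a₃ :=
    le_of_pow_le_pow_left₀ two_ne_zero h3.le hs
  -- bound for a₂
  have k2 : p^3/16 ≤ (p/4) * a₂ * (4/3 * a₂) * (16/9 * a₂) := by
    rw [← hprod]; gcongr
  have e2 : (27:ℝ)/256 * p^2 ≤ a₂^3 := by nlinarith [hp]
  have c2pow : ((4:ℝ) ^ ((4:ℝ)/3))^(3:ℕ) = 256 := by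
    rw [← Real.rpow_natCast ((4:ℝ) ^ ((4:ℝ)/3)) 3, ← Real.rpow_mul (by norm_num : (0:ℝ) ≤ 4)]
    norm_num
  have p2pow : (p ^ ((2:ℝ)/3))^(3:ℕ) = p^2 := by
    rw [← Real.rpow_natCast (p ^ ((2:ℝ)/3)) 3, ← Real.rpow_mul hp.le]
    norm_num
  have c2pos : (0:ℝ) < (4:ℝ) ^ ((4:ℝ)/3) := Real.rpow_pos_of_pos (by norm_num) _
  have goal2 : (3 / 4 ^ ((4 : ℝ) / 3)) * p ^ ((2 : ℝ) / 3) ≤ a₂ := by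
    apply le_of_pow_le_pow_left₀ (n := 3) three_ne_zero h2.le
    have : ((3 / 4 ^ ((4 : ℝ) / 3)) * p ^ ((2 : ℝ) / 3))^(3:ℕ)
        = 27 / ((4:ℝ) ^ ((4:ℝ)/3))^(3:ℕ) * (p ^ ((2:ℝ)/3))^(3:ℕ) := by
      rw [mul_pow, div_pow]; norm_num
    rw [this, c2pow, p2pow]
    linarith
  -- bound for a₁
  have k1 : p^3/16 ≤ a₁ * (4/3 * a₁) * (16/9 * a₁) * (64/27 * a₁) := by
    rw [← hprod]; gcongr
  have e1 : (729:ℝ)/65536 * p^3 ≤ a₁^4 := by ring_nf at k1 ⊢; linarith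
  have hc1 : (9:ℝ) / 4 ^ ((8:ℝ)/3) ≤ 9/32 := by
    have h32 : (32:ℝ) ≤ 4 ^ ((8:ℝ)/3) := by
      have h4eq : (4:ℝ) ^ ((8:ℝ)/3) = 2 ^ ((16:ℝ)/3) := by
        rw [show (4:ℝ) = (2:ℝ)^(2:ℕ) by norm_num, ← Real.rpow_natCast (2:ℝ) 2,
          ← Real.rpow_mul (by norm_num : (0:ℝ) ≤ 2)]
        norm_num
      rw [h4eq, show (32:ℝ) = (2:ℝ)^(5:ℕ) by norm_num, ← Real.rpow_natCast (2:ℝ) 5]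
      exact Real.rpow_le_rpow_of_exponent_le (by norm_num) (by norm_num)
    have hpos : (0:ℝ) < 4 ^ ((8:ℝ)/3) := Real.rpow_pos_of_pos (by norm_num) _
    rw [div_le_div_iff₀ hpos (by norm_num)]
    linarith
  have p3pow : (p ^ ((3:ℝ)/4))^(4:ℕ) = p^3 := by
    rw [← Real.rpow_natCast (p ^ ((3:ℝ)/4)) 4, ← Real.rpow_mul hp.le,
      show ((3:ℝ)/4) * ((4:ℕ):ℝ) = ((3:ℕ):ℝ) by norm_num, Real.rpow_natCast]
  have prpos : (0:ℝ) < p ^ ((3:ℝ)/4) := Real.rpow_pos_of_pos hp _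
  have goal1' : (9:ℝ)/32 * p ^ ((3:ℝ)/4) ≤ a₁ := by
    apply le_of_pow_le_pow_left₀ (n := 4) (by norm_num) h1.le
    have : ((9:ℝ)/32 * p ^ ((3:ℝ)/4))^(4:ℕ) = 6561/1048576 * (p ^ ((3:ℝ)/4))^(4:ℕ) := by
      rw [mul_pow]; norm_num
    rw [this, p3pow]
    linarith [e1, pow_pos hp 3]
  have goal1 : (9 / 4 ^ ((8 : ℝ) / 3)) * p ^ ((3 : ℝ) / 4) ≤ a₁ := by
    calc (9 / 4 ^ ((8 : ℝ) / 3)) * p ^ ((3 : ℝ) / 4)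
        ≤ 9/32 * p ^ ((3:ℝ)/4) := by nlinarith [prpos, hc1]
      _ ≤ a₁ := goal1'
  exact ⟨goal1, goal2, goal3⟩
end

section
/- With ψ(x) = -(6/π) x K₁(4πx) + 24 x² K₀(4πx), for all x ≥ 1/2 one has ∑_{d=1}^∞ ψ(dx) ≤ 9 x^{3/2} e^{-4πx}. -/
open Real MeasureTheory

/-- The modified Bessel function of the second kind `K_ν(x)`, via its
integral representation `K_ν(x) = ∫₀^∞ exp(-x cosh t) cosh(ν t) dt`. -/
noncomputable def besselK (ν x : ℝ) : ℝ :=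
  ∫ t in Set.Ioi (0 : ℝ), Real.exp (-x * Real.cosh t) * Real.cosh (ν * t)

/-- The function ψ from the paper. -/
noncomputable def psiFn (x : ℝ) : ℝ :=
  -(6 / Real.pi) * x * besselK 1 (4 * Real.pi * x) +
    24 * x ^ 2 * besselK 0 (4 * Real.pi * x)

/-!
Bounding `cosh t` below by `1 + t²/2` turns the integral for `K₀` into a Gaussian one,
so `K₀(z) ≤ √(π/(2z)) e^{-z}`; since `cosh (ν t) ≤ e^{|ν| cosh t}`, also
`K_ν(z) ≤ K₀(z - |ν|)`. As `K₀, K₁ ≥ 0`, the `K₀`-term of `ψ` bounds it from above and the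
`K₁`-term from below, giving `|ψ(y)| ≤ 6√2 y^{3/2} e^{-4πy}` for `y ≥ 1/2`.
With `t = e^{-4πx} ≤ 1/100` and `(d+1)^{3/2} ≤ 4^d`, the series is dominated by the geometric
series `6√2 x^{3/2} t ∑ (4t)^d = 6√2 x^{3/2} t / (1 - 4t) ≤ 9 x^{3/2} t`.
-/

lemma one_add_sq_div_two_le_cosh (t : ℝ) : 1 + t ^ 2 / 2 ≤ cosh t := by
  have hsinh : (t / 2) ^ 2 ≤ sinh (t / 2) ^ 2 := by
    rw [← sq_abs (sinh _), abs_sinh, ← sq_abs]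
    exact pow_le_pow_left₀ (abs_nonneg _) (self_le_sinh_iff.2 (abs_nonneg _)) 2
  calc 1 + t ^ 2 / 2 = 1 + 2 * (t / 2) ^ 2 := by ring
    _ ≤ 1 + 2 * sinh (t / 2) ^ 2 := by linarith
    _ = cosh t := by
        have h := cosh_two_mul (t / 2)
        rw [mul_div_cancel₀ t two_ne_zero, cosh_sq'] at h
        linarith

lemma cosh_mul_le_exp_mul_cosh (ν t : ℝ) : cosh (ν * t) ≤ exp (|ν| * cosh t) := by
  have habs : |t| ≤ cosh t := by nlinarith [one_add_sq_div_two_le_cosh t, sq_abs t]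
  calc cosh (ν * t) = cosh |ν * t| := (cosh_abs _).symm
    _ ≤ exp |ν * t| := by
        rw [cosh_eq]
        linarith [exp_le_exp.2 (neg_le_self (abs_nonneg (ν * t)))]
    _ ≤ exp (|ν| * cosh t) := by
        rw [abs_mul, exp_le_exp]
        exact mul_le_mul_of_nonneg_left habs (abs_nonneg ν)

lemma exp_neg_mul_cosh_le {z : ℝ} (hz : 0 ≤ z) (t : ℝ) :
    exp (-z * cosh t) ≤ exp (-z) * exp (-(z / 2) * t ^ 2) := by
  rw [← exp_add, exp_le_exp]
  nlinarith [one_add_sq_div_two_le_cosh t]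

lemma integrable_exp_neg_mul_cosh {z : ℝ} (hz : 0 < z) :
    Integrable fun t => exp (-z * cosh t) :=
  ((integrable_exp_neg_mul_sq (half_pos hz)).const_mul (exp (-z))).mono'
    (by fun_prop) (.of_forall fun t =>
      (norm_of_nonneg (exp_nonneg _)).trans_le (exp_neg_mul_cosh_le hz.le t))

lemma besselK_nonneg (ν z : ℝ) : 0 ≤ besselK ν z :=
  setIntegral_nonneg measurableSet_Ioi fun _ _ =>
    mul_nonneg (exp_nonneg _) (cosh_pos _).le

lemma besselK_zero_le_sqrt_mul_exp {z : ℝ} (hz : 0 < z) :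
    besselK 0 z ≤ √(π / (2 * z)) * exp (-z) := by
  have hgauss := ((integrable_exp_neg_mul_sq (half_pos hz)).const_mul (exp (-z))).integrableOn
    (s := Set.Ioi 0)
  calc besselK 0 z = ∫ t in Set.Ioi (0 : ℝ), exp (-z * cosh t) := by simp [besselK]
    _ ≤ ∫ t in Set.Ioi (0 : ℝ), exp (-z) * exp (-(z / 2) * t ^ 2) :=
        integral_mono_of_nonneg (.of_forall fun _ => exp_nonneg _) hgauss
          (.of_forall (exp_neg_mul_cosh_le hz.le))
    _ = √(π / (2 * z)) * exp (-z) := by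
        rw [integral_const_mul, integral_gaussian_Ioi, mul_comm]
        congr 1
        rw [show π / (z / 2) = 2 ^ 2 * (π / (2 * z)) by field_simp, sqrt_mul (by positivity),
          sqrt_sq zero_le_two, mul_div_cancel_left₀ _ two_ne_zero]

lemma besselK_le_besselK_zero_sub {ν z : ℝ} (h : |ν| < z) :
    besselK ν z ≤ besselK 0 (z - |ν|) :=
  integral_mono_of_nonneg
    (.of_forall fun _ => mul_nonneg (exp_nonneg _) (cosh_pos _).le)
    (by simpa [IntegrableOn] using (integrable_exp_neg_mul_cosh (sub_pos.2 h)).integrableOn)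
    (.of_forall fun t => by
      calc exp (-z * cosh t) * cosh (ν * t) ≤ exp (-z * cosh t) * exp (|ν| * cosh t) :=
            mul_le_mul_of_nonneg_left (cosh_mul_le_exp_mul_cosh ν t) (exp_nonneg _)
        _ = exp (-(z - |ν|) * cosh t) * cosh (0 * t) := by
            rw [← exp_add, zero_mul, cosh_zero, mul_one]; ring_nf)

lemma besselK_le_exp_abs_sub {ν z : ℝ} (h : |ν| + π / 2 ≤ z) :
    besselK ν z ≤ exp (|ν| - z) := by
  have hpos : 0 < z - |ν| := by linarith [pi_pos]
  calc besselK ν z ≤ besselK 0 (z - |ν|) := besselK_le_besselK_zero_sub (by linarith)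
    _ ≤ √(π / (2 * (z - |ν|))) * exp (-(z - |ν|)) := besselK_zero_le_sqrt_mul_exp hpos
    _ ≤ 1 * exp (|ν| - z) := by
        rw [neg_sub]
        gcongr
        rw [sqrt_le_one, div_le_one (by positivity)]
        linarith
    _ = exp (|ν| - z) := one_mul _

lemma rpow_three_div_two_eq_sqrt_pow {y : ℝ} (hy : 0 ≤ y) : y ^ ((3 : ℝ) / 2) = √y ^ 3 := by
  rw [sqrt_eq_rpow, ← rpow_natCast, ← rpow_mul hy]
  norm_num

lemma psiFn_le {y : ℝ} (hy : 0 < y) :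
    psiFn y ≤ 6 * √2 * y ^ ((3 : ℝ) / 2) * exp (-4 * π * y) := by
  have hz : 0 < 4 * π * y := by positivity
  have hsqrt : √(π / (2 * (4 * π * y))) = √2 / (4 * √y) := by
    rw [← sqrt_sq (by positivity : 0 ≤ √2 / (4 * √y)), div_pow, mul_pow,
      sq_sqrt zero_le_two, sq_sqrt hy.le]
    congr 1
    field_simp
    ring
  calc psiFn y ≤ 24 * y ^ 2 * besselK 0 (4 * π * y) := by
        have := mul_nonneg (by positivity : 0 ≤ 6 / π * y) (besselK_nonneg 1 (4 * π * y))
        unfold psiFn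
        linarith
    _ ≤ 24 * y ^ 2 * (√(π / (2 * (4 * π * y))) * exp (-(4 * π * y))) := by
        gcongr
        exact besselK_zero_le_sqrt_mul_exp hz
    _ = 6 * √2 * y ^ ((3 : ℝ) / 2) * exp (-4 * π * y) := by
        rw [hsqrt, rpow_three_div_two_eq_sqrt_pow hy.le, neg_mul, neg_mul]
        field_simp
        linear_combination (-24 * (√y ^ 2 + y)) * sq_sqrt hy.le

lemma neg_psiFn_le {y : ℝ} (hy : 1 / 2 ≤ y) :
    -psiFn y ≤ 6 * √2 * y ^ ((3 : ℝ) / 2) * exp (-4 * π * y) := by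
  have hy0 : 0 < y := by linarith
  have hK1 : besselK 1 (4 * π * y) ≤ exp 1 * exp (-4 * π * y) := by
    have := besselK_le_exp_abs_sub (ν := 1) (z := 4 * π * y)
      (by rw [abs_one]; nlinarith [pi_gt_three])
    rwa [abs_one, sub_eq_add_neg, exp_add, ← neg_mul, ← neg_mul] at this
  have hy_le : y ≤ √2 * y ^ ((3 : ℝ) / 2) := by
    have h1 : 1 ≤ √(2 * y) := one_le_sqrt.2 (by linarith)
    calc y = y * 1 := (mul_one y).symm
      _ ≤ y * √(2 * y) := by gcongr
      _ = √2 * y ^ ((3 : ℝ) / 2) := by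
          rw [rpow_three_div_two_eq_sqrt_pow hy0.le, sqrt_mul zero_le_two]
          nth_rewrite 1 [← sq_sqrt hy0.le]
          ring
  have he : exp 1 ≤ π := by linarith [exp_one_lt_d9, pi_gt_three]
  calc -psiFn y ≤ 6 / π * y * besselK 1 (4 * π * y) := by
        have := mul_nonneg (by positivity : 0 ≤ 24 * y ^ 2) (besselK_nonneg 0 (4 * π * y))
        unfold psiFn
        linarith
    _ ≤ 6 / π * y * (π * exp (-4 * π * y)) := by
        gcongr
        exact hK1.trans (by gcongr)
    _ = 6 * y * exp (-4 * π * y) := by field_simp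
    _ ≤ 6 * √2 * y ^ ((3 : ℝ) / 2) * exp (-4 * π * y) := by
        rw [mul_assoc 6 (√2)]
        gcongr

lemma exp_neg_four_pi_mul_le {x : ℝ} (hx : 1 / 2 ≤ x) : exp (-4 * π * x) ≤ 1 / 100 := by
  have h100 : (100 : ℝ) ≤ exp 6 := by
    have := sum_le_exp_of_nonneg (x := 6) (by norm_num) 5
    norm_num [Finset.sum_range_succ, Nat.factorial] at this
    linarith
  calc exp (-4 * π * x) ≤ exp (-6) := exp_le_exp.2 (by nlinarith [pi_gt_three])
    _ ≤ 1 / 100 := by rw [exp_neg, one_div]; exact inv_anti₀ (by norm_num) h100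

lemma natCast_add_one_rpow_le_four_pow {k : ℝ} (hk : k ≤ 2) (d : ℕ) :
    ((d : ℝ) + 1) ^ k ≤ 4 ^ d :=
  calc ((d : ℝ) + 1) ^ k ≤ ((d : ℝ) + 1) ^ (2 : ℝ) :=
        rpow_le_rpow_of_exponent_le (by linarith [d.cast_nonneg (α := ℝ)]) hk
    _ = ((d : ℝ) + 1) ^ 2 := rpow_two _
    _ ≤ ((2 : ℝ) ^ d) ^ 2 := by gcongr; exact_mod_cast d.lt_two_pow_self
    _ = 4 ^ d := by rw [← pow_mul, mul_comm, pow_mul]; norm_num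

lemma abs_psiFn_natCast_add_one_mul_le {x : ℝ} (hx : 1 / 2 ≤ x) (d : ℕ) :
    |psiFn ((d + 1) * x)| ≤
      6 * √2 * x ^ ((3 : ℝ) / 2) * exp (-4 * π * x) * (4 * exp (-4 * π * x)) ^ d := by
  have hd : (0 : ℝ) ≤ d := d.cast_nonneg
  have hy : 1 / 2 ≤ (d + 1) * x := by nlinarith
  have hexp : exp (-4 * π * ((d + 1) * x)) = exp (-4 * π * x) * exp (-4 * π * x) ^ d := by
    rw [← exp_nat_mul, ← exp_add]
    ring_nf
  calc |psiFn ((d + 1) * x)|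
      ≤ 6 * √2 * ((d + 1) * x) ^ ((3 : ℝ) / 2) * exp (-4 * π * ((d + 1) * x)) :=
        abs_le.2 ⟨by linarith [neg_psiFn_le hy], psiFn_le (by linarith)⟩
    _ = 6 * √2 * x ^ ((3 : ℝ) / 2) * exp (-4 * π * x) *
          (((d : ℝ) + 1) ^ ((3 : ℝ) / 2) * exp (-4 * π * x) ^ d) := by
        rw [mul_rpow (by positivity) (by linarith), hexp]
        ring
    _ ≤ 6 * √2 * x ^ ((3 : ℝ) / 2) * exp (-4 * π * x) * (4 ^ d * exp (-4 * π * x) ^ d) := by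
        gcongr
        exact natCast_add_one_rpow_le_four_pow (by norm_num) d
    _ = 6 * √2 * x ^ ((3 : ℝ) / 2) * exp (-4 * π * x) * (4 * exp (-4 * π * x)) ^ d := by
        rw [mul_pow]

theorem psi_sum_bound (x : ℝ) (hx : (1 : ℝ) / 2 ≤ x) :
    ∑' d : ℕ, psiFn ((d + 1) * x) ≤
      9 * x ^ ((3 : ℝ) / 2) * Real.exp (-4 * Real.pi * x) := by
  set t := exp (-4 * π * x)
  set A := 6 * √2 * x ^ ((3 : ℝ) / 2) * t
  have ht : t ≤ 1 / 100 := exp_neg_four_pi_mul_le hx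
  have hq : 4 * t < 1 := by linarith
  have hgeom : Summable fun d : ℕ => A * (4 * t) ^ d :=
    (summable_geometric_of_lt_one (by positivity) hq).mul_left A
  have hterm := abs_psiFn_natCast_add_one_mul_le hx
  calc ∑' d : ℕ, psiFn ((d + 1) * x) ≤ ∑' d : ℕ, A * (4 * t) ^ d :=
        (hgeom.of_norm_bounded hterm).tsum_le_tsum
          (fun d => (le_abs_self _).trans (hterm d)) hgeom
    _ = 6 * √2 / (1 - 4 * t) * (x ^ ((3 : ℝ) / 2) * t) := by
        rw [tsum_mul_left, tsum_geometric_of_lt_one (by positivity) hq]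
        ring
    _ ≤ 9 * (x ^ ((3 : ℝ) / 2) * t) := by
        gcongr
        rw [div_le_iff₀ (by linarith)]
        linarith [(sqrt_le_iff.2 ⟨by norm_num, by norm_num⟩ : √2 ≤ 1.415)]
    _ = 9 * x ^ ((3 : ℝ) / 2) * t := by ring
end

section
/- Let p be an odd prime, χ_p the real character mod p, and for a positive integer n write n* = n / p^{ord_p(n)}. Then ∑_{d | n} ((pn/d) − d) χ_p(d) = (pn − n* χ_p(n*)) ∑_{d | n*} χ_p(d)/d, and moreover (pn − n*) φ(n*)/n* ≥ (p−1) φ(n). -/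
/-!
As `χ_p` vanishes on multiples of `p`, only the divisors of `n*` contribute to the sum. Pairing `d`
with `n* / d` and using `χ_p(d)⁻¹ = χ_p(d)` gives
`∑_{d ∣ n*} d χ_p(d) = n* χ_p(n*) ∑_{d ∣ n*} χ_p(d) / d`, which is the identity.
For the inequality write `n = p^k n*`: the right side is `(p^{k+1} - 1) φ(n*)`, while
`(p - 1) φ(n) = (p - 1) φ(p^k) φ(n*) ≤ (p - 1) p^k φ(n*)`.
-/

open Nat Finset

theorem Nat.sum_divisors_eq_sum_divisors_ordCompl {M : Type*} [AddCommMonoid M] {p : ℕ}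
    (n : ℕ) {f : ℕ → M} (hf : ∀ d, p ∣ d → f d = 0) :
    ∑ d ∈ n.divisors, f d = ∑ d ∈ (ordCompl[p] n).divisors, f d := by
  rcases eq_or_ne n 0 with rfl | hn
  · simp
  refine (sum_subset (divisors_subset_of_dvd hn (ordCompl_dvd n p)) fun d hd hdm => hf d ?_).symm
  by_contra hpd
  exact hdm (mem_divisors.mpr
    ⟨dvd_ordCompl_of_dvd_not_dvd (dvd_of_mem_divisors hd) hpd, (ordCompl_pos p hn).ne'⟩)

section Character

variable {K : Type*} [Field K] [CharZero K] (χ : ℕ →*₀ K)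

theorem sum_divisors_mul_apply_eq {m : ℕ} (hχ : ∀ d ∈ m.divisors, χ d * χ d = 1) :
    ∑ d ∈ m.divisors, (d : K) * χ d = m * χ m * ∑ d ∈ m.divisors, χ d / d := by
  rw [← sum_div_divisors, mul_sum]
  refine sum_congr rfl fun d hd => ?_
  have hd0 : (d : K) ≠ 0 := Nat.cast_ne_zero.mpr (pos_of_mem_divisors hd).ne'
  obtain ⟨e, rfl⟩ := dvd_of_mem_divisors hd
  rw [Nat.mul_div_cancel_left e (pos_of_mem_divisors hd), map_mul, Nat.cast_mul, mul_div_assoc',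
    eq_div_iff hd0]
  linear_combination -((d : K) * e * χ e) * hχ _ hd

theorem sum_divisors_sub_mul_apply_eq {p : ℕ} (hp : p.Prime) (hzero : ∀ d, p ∣ d → χ d = 0)
    (hsq : ∀ d, ¬ p ∣ d → χ d * χ d = 1) (n : ℕ) (c : K) :
    ∑ d ∈ n.divisors, (c / d - d) * χ d =
      (c - ((ordCompl[p] n : ℕ) : K) * χ (ordCompl[p] n)) *
        ∑ d ∈ (ordCompl[p] n).divisors, χ d / d := by
  set m := ordCompl[p] n
  have hsq_m : ∀ d ∈ m.divisors, χ d * χ d = 1 := by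
    refine fun d hd => hsq d fun hpd => ?_
    have hn : n ≠ 0 := by rintro rfl; simp [m] at hd
    exact not_dvd_ordCompl hp hn (hpd.trans (dvd_of_mem_divisors hd))
  rw [sum_divisors_eq_sum_divisors_ordCompl n fun d hpd => by rw [hzero d hpd, mul_zero],
    sub_mul, ← sum_divisors_mul_apply_eq χ hsq_m, mul_sum, ← sum_sub_distrib]
  exact sum_congr rfl fun _ _ => by ring

end Character

section Legendre

variable (p : ℕ) [Fact p.Prime]

def legendreChar : ℕ →*₀ ℚ :=
  (Int.castRingHom ℚ).toMonoidWithZeroHom.comp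
    ((legendreSym.hom p).comp (Nat.castRingHom ℤ).toMonoidWithZeroHom)

theorem legendreChar_apply (d : ℕ) : legendreChar p d = legendreSym p d := rfl

variable {p}

theorem legendreChar_eq_zero_of_dvd {d : ℕ} (h : p ∣ d) : legendreChar p d = 0 := by
  rw [legendreChar_apply, Int.cast_eq_zero, legendreSym.eq_zero_iff, Int.cast_natCast,
    ZMod.natCast_eq_zero_iff]
  exact h

theorem legendreChar_mul_self_of_not_dvd {d : ℕ} (h : ¬ p ∣ d) :
    legendreChar p d * legendreChar p d = 1 := by
  have hd : ((d : ℤ) : ZMod p) ≠ 0 := by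
    rwa [Int.cast_natCast, Ne, ZMod.natCast_eq_zero_iff]
  rw [legendreChar_apply, ← Int.cast_mul, ← sq, legendreSym.sq_one p hd, Int.cast_one]

end Legendre

theorem Nat.totient_eq_totient_ordProj_mul_totient_ordCompl {p n : ℕ} (hp : p.Prime)
    (hn : n ≠ 0) : φ n = φ (ordProj[p] n) * φ (ordCompl[p] n) := by
  conv_lhs => rw [← ordProj_mul_ordCompl_eq_self n p]
  exact totient_mul ((coprime_ordCompl hp hn).pow_left _)

theorem Nat.sub_one_mul_totient_le {p n : ℕ} (hp : p.Prime) (hn : n ≠ 0) :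
    ((p : ℚ) - 1) * φ n ≤
      ((p : ℚ) * n - (ordCompl[p] n : ℕ)) * φ (ordCompl[p] n) / (ordCompl[p] n : ℕ) := by
  set k := n.factorization p
  set m := ordCompl[p] n
  have hm : (m : ℚ) ≠ 0 := Nat.cast_ne_zero.mpr (ordCompl_pos p hn).ne'
  have hnm : (n : ℚ) = p ^ k * m := by exact_mod_cast (ordProj_mul_ordCompl_eq_self n p).symm
  have hp1 : (1 : ℚ) ≤ p := by exact_mod_cast hp.one_le
  calc ((p : ℚ) - 1) * φ n = (p - 1) * φ (p ^ k) * φ m := by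
        rw [totient_eq_totient_ordProj_mul_totient_ordCompl hp hn]; push_cast; ring
    _ ≤ (p - 1) * p ^ k * φ m := by
        gcongr
        exact_mod_cast totient_le _
    _ ≤ (p ^ (k + 1) - 1) * φ m := by
        gcongr
        linarith [pow_succ (p : ℚ) k, one_le_pow₀ (n := k) hp1]
    _ = ((p : ℚ) * n - m) * φ m / m := by
        rw [hnm]; field_simp; ring

theorem eisenstein_sum_identity_general (p : ℕ) [Fact p.Prime]
    (n : ℕ) (hn : 0 < n) :
    (∑ d ∈ n.divisors, (((p : ℚ) * n / d) - d) * legendreSym p d =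
      ((p : ℚ) * n - (n / p ^ (n.factorization p) : ℕ) *
          legendreSym p (n / p ^ (n.factorization p))) *
        ∑ d ∈ (n / p ^ (n.factorization p)).divisors, (legendreSym p d : ℚ) / d) ∧
    ((p : ℚ) - 1) * Nat.totient n ≤
      ((p : ℚ) * n - (n / p ^ (n.factorization p) : ℕ)) *
        Nat.totient (n / p ^ (n.factorization p)) / (n / p ^ (n.factorization p) : ℕ) := by
  have hp : p.Prime := Fact.out
  have hcast : (n : ℤ) / (p : ℤ) ^ n.factorization p = ((ordCompl[p] n : ℕ) : ℤ) := by
    rw [Int.natCast_div, Nat.cast_pow]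
  refine ⟨?_, sub_one_mul_totient_le hp hn.ne'⟩
  rw [hcast]
  simpa only [legendreChar_apply] using
    sum_divisors_sub_mul_apply_eq (legendreChar p) hp (fun _ => legendreChar_eq_zero_of_dvd)
      (fun _ => legendreChar_mul_self_of_not_dvd) n (p * n)

theorem eisenstein_sum_identity (p : ℕ) [Fact p.Prime] (hodd : Odd p)
    (n : ℕ) (hn : 0 < n) :
    (∑ d ∈ n.divisors, (((p : ℚ) * n / d) - d) * legendreSym p d =
      ((p : ℚ) * n - (n / p ^ (n.factorization p) : ℕ) *
          legendreSym p (n / p ^ (n.factorization p))) *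
        ∑ d ∈ (n / p ^ (n.factorization p)).divisors, (legendreSym p d : ℚ) / d) ∧
    ((p : ℚ) - 1) * Nat.totient n ≤
      ((p : ℚ) * n - (n / p ^ (n.factorization p) : ℕ)) *
        Nat.totient (n / p ^ (n.factorization p)) / (n / p ^ (n.factorization p) : ℕ) :=
  eisenstein_sum_identity_general p n hn
end

section
/- For x > 0 and positive reals a₁, a₂, a₃, a₄ with a₁a₂a₃a₄ = p/16 (p ≥ 17), a₁ ≥ 1, a₂ ≥ 3/4, a₃ ≥ 9/16, and a_{i+1} ≥ (3/4)a_i, the lattice point count bound ∏_{i=1}^{4}(4√(x a_i / p) + 1) ≤ 64 x² p^{-3/2} + 75.52 x^{3/2} p^{-1} + 30.49 x p^{-1/2} + 8.11 x^{1/2} + 1 holds. -/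
/-!
Write `b i = √a i` and `c = 4 √(x / p)`. The left-hand side is `∑ c ^ k e_k(b)`, and
`e_4(b) = √(a₁a₂a₃a₄) = √p / 4` exactly, so it suffices to bound `e_1, e_2, e_3` by
multiples of `√p`. Every term of `e_k(b)` is `√m` for a monomial `m` in the `a i`. If the
complementary monomial `n` (with `m n = p / 16`) is bounded below by the lower bounds on the
`a i`, then `m ≤ c² p` directly. Otherwise the ratio conditions `a (i + 1) ≥ 3/4 a i` give an
estimate `m ^ (k + 1) ≤ K p ^ k`, which turns into `m ≤ (K / 17) ^ (1 / (k + 1)) p` since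
`p ≥ 17`. The decimal constants are the resulting square roots, rounded up.
-/

open Real

theorem prod_mul_add_one_le_of_esymm_le {b₁ b₂ b₃ b₄ c E₁ E₂ E₃ : ℝ} (hc : 0 ≤ c)
    (h₁ : b₁ + b₂ + b₃ + b₄ ≤ E₁)
    (h₂ : b₁ * b₂ + b₁ * b₃ + b₁ * b₄ + b₂ * b₃ + b₂ * b₄ + b₃ * b₄ ≤ E₂)
    (h₃ : b₁ * b₂ * b₃ + b₁ * b₂ * b₄ + b₁ * b₃ * b₄ + b₂ * b₃ * b₄ ≤ E₃) :
    (c * b₁ + 1) * (c * b₂ + 1) * (c * b₃ + 1) * (c * b₄ + 1) ≤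
      c ^ 4 * (b₁ * b₂ * b₃ * b₄) + c ^ 3 * E₃ + c ^ 2 * E₂ + c * E₁ + 1 :=
  calc _ = c ^ 4 * (b₁ * b₂ * b₃ * b₄)
        + c ^ 3 * (b₁ * b₂ * b₃ + b₁ * b₂ * b₄ + b₁ * b₃ * b₄ + b₂ * b₃ * b₄)
        + c ^ 2 * (b₁ * b₂ + b₁ * b₃ + b₁ * b₄ + b₂ * b₃ + b₂ * b₄ + b₃ * b₄)
        + c * (b₁ + b₂ + b₃ + b₄) + 1 := by ring
    _ ≤ _ := by gcongr

theorem sqrt_le_mul_sqrt_of_le_sq_mul {m c p : ℝ} (hc : 0 ≤ c) (h : m ≤ c ^ 2 * p) :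
    √m ≤ c * √p :=
  calc √m ≤ √(c ^ 2 * p) := sqrt_le_sqrt h
    _ = c * √p := by rw [sqrt_mul (sq_nonneg c), sqrt_sq hc]

theorem le_mul_of_pow_succ_le {m K c p p₀ : ℝ} {k : ℕ} (hc : 0 ≤ c) (hp₀ : 0 ≤ p₀)
    (hp : p₀ ≤ p) (h : m ^ (k + 1) ≤ K * p ^ k) (hK : K ≤ p₀ * c ^ (k + 1)) : m ≤ c * p := by
  have hp' : 0 ≤ p := hp₀.trans hp
  refine le_of_pow_le_pow_left₀ k.succ_ne_zero (by positivity) ?_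
  calc m ^ (k + 1) ≤ K * p ^ k := h
    _ ≤ p₀ * c ^ (k + 1) * p ^ k := by gcongr
    _ ≤ p * c ^ (k + 1) * p ^ k := by gcongr
    _ = (c * p) ^ (k + 1) := by ring

theorem sqrt_le_mul_sqrt_of_pow_succ_le {m K c p p₀ : ℝ} {k : ℕ} (hc : 0 ≤ c) (hp₀ : 0 ≤ p₀)
    (hp : p₀ ≤ p) (h : m ^ (k + 1) ≤ K * p ^ k) (hK : K ≤ p₀ * c ^ (2 * (k + 1))) :
    √m ≤ c * √p :=
  sqrt_le_mul_sqrt_of_le_sq_mul hc <|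
    le_mul_of_pow_succ_le (sq_nonneg c) hp₀ hp h (by rwa [← pow_mul])

/-- The coefficients `a i` of the reduced diagonal decomposition of a quaternary form of
discriminant `p`. -/
structure ReducedCoeffs (p a₁ a₂ a₃ a₄ : ℝ) : Prop where
  seventeen_le : 17 ≤ p
  one_le_a₁ : 1 ≤ a₁
  le_a₂ : 3 / 4 * a₁ ≤ a₂
  le_a₃ : 3 / 4 * a₂ ≤ a₃
  le_a₄ : 3 / 4 * a₃ ≤ a₄
  prod_eq : a₁ * a₂ * a₃ * a₄ = p / 16

namespace ReducedCoeffs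

variable {p a₁ a₂ a₃ a₄ : ℝ}

theorem pos (h : ReducedCoeffs p a₁ a₂ a₃ a₄) : 0 < a₁ ∧ 0 < a₂ ∧ 0 < a₃ ∧ 0 < a₄ := by
  have := h.one_le_a₁; have := h.le_a₂; have := h.le_a₃; have := h.le_a₄
  refine ⟨?_, ?_, ?_, ?_⟩ <;> linarith

theorem three_div_four_le_a₂ (h : ReducedCoeffs p a₁ a₂ a₃ a₄) : 3 / 4 ≤ a₂ := by
  linarith [h.one_le_a₁, h.le_a₂]

theorem nine_div_sixteen_le_a₃ (h : ReducedCoeffs p a₁ a₂ a₃ a₄) : 9 / 16 ≤ a₃ := by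
  linarith [h.three_div_four_le_a₂, h.le_a₃]

theorem sq_a₁_mul_a₂_le (h : ReducedCoeffs p a₁ a₂ a₃ a₄) : (a₁ * a₂) ^ 2 ≤ 16 / 81 * p := by
  obtain ⟨ha₁, ha₂, ha₃, ha₄⟩ := h.pos
  have h₃₄ : 81 / 256 * (a₁ * a₂) ≤ a₃ * a₄ := by
    have h₃ : 9 / 16 * a₁ ≤ a₃ := by linarith [h.le_a₂, h.le_a₃]
    have h₄ : 9 / 16 * a₂ ≤ a₄ := by linarith [h.le_a₃, h.le_a₄]
    nlinarith [mul_le_mul h₃ h₄ (by positivity) ha₃.le]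
  nlinarith [mul_le_mul_of_nonneg_left h₃₄ (by positivity : 0 ≤ a₁ * a₂), h.prod_eq]

theorem sq_a₁_mul_a₃_le (h : ReducedCoeffs p a₁ a₂ a₃ a₄) : (a₁ * a₃) ^ 2 ≤ 1 / 9 * p := by
  obtain ⟨ha₁, ha₂, ha₃, ha₄⟩ := h.pos
  have h₂₄ : 9 / 16 * (a₁ * a₃) ≤ a₂ * a₄ := by
    nlinarith [mul_le_mul h.le_a₂ h.le_a₄ (by positivity) ha₂.le]
  nlinarith [mul_le_mul_of_nonneg_left h₂₄ (by positivity : 0 ≤ a₁ * a₃), h.prod_eq]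

theorem pow_three_a₂_mul_a₃_le (h : ReducedCoeffs p a₁ a₂ a₃ a₄) :
    (a₂ * a₃) ^ 3 ≤ 1 / 108 * p ^ 2 := by
  obtain ⟨ha₁, ha₂, ha₃, ha₄⟩ := h.pos
  have h₂₃ : 0 ≤ a₂ * a₃ := by positivity
  have k₂ : a₂ * (a₂ * a₃) ≤ 1 / 9 * p := by
    have : 9 / 16 * a₂ ≤ a₁ * a₄ := by nlinarith [h.le_a₃, h.le_a₄, h.one_le_a₁]
    nlinarith [mul_le_mul_of_nonneg_left this h₂₃, h.prod_eq]
  have k₃ : a₃ * (a₂ * a₃) ≤ 1 / 12 * p := by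
    have : 3 / 4 * a₃ ≤ a₁ * a₄ := by nlinarith [h.le_a₄, h.one_le_a₁]
    nlinarith [mul_le_mul_of_nonneg_left this h₂₃, h.prod_eq]
  nlinarith [mul_le_mul k₂ k₃ (by positivity) (by linarith [h.seventeen_le])]

theorem pow_four_a₁_mul_a₂_mul_a₃_le (h : ReducedCoeffs p a₁ a₂ a₃ a₄) :
    (a₁ * a₂ * a₃) ^ 4 ≤ 1 / 729 * p ^ 3 := by
  obtain ⟨ha₁, ha₂, ha₃, ha₄⟩ := h.pos
  have hle : a₁ * a₂ * a₃ ≤ 4096 / 729 * a₄ ^ 3 := by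
    have h₃ : a₃ ≤ 4 / 3 * a₄ := by linarith [h.le_a₄]
    have h₂ : a₂ ≤ 16 / 9 * a₄ := by linarith [h.le_a₃]
    have h₁ : a₁ ≤ 64 / 27 * a₄ := by linarith [h.le_a₂]
    calc a₁ * a₂ * a₃ ≤ (64 / 27 * a₄) * (16 / 9 * a₄) * (4 / 3 * a₄) := by gcongr
      _ = _ := by ring
  calc (a₁ * a₂ * a₃) ^ 4 = (a₁ * a₂ * a₃) ^ 3 * (a₁ * a₂ * a₃) := by ring
    _ ≤ (a₁ * a₂ * a₃) ^ 3 * (4096 / 729 * a₄ ^ 3) := by gcongr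
    _ = 4096 / 729 * (a₁ * a₂ * a₃ * a₄) ^ 3 := by ring
    _ = 1 / 729 * p ^ 3 := by rw [h.prod_eq]; ring

theorem sqrt_prod (h : ReducedCoeffs p a₁ a₂ a₃ a₄) : √a₁ * √a₂ * √a₃ * √a₄ = √p / 4 := by
  obtain ⟨ha₁, ha₂, ha₃, -⟩ := h.pos
  rw [← sqrt_mul ha₁.le, ← sqrt_mul (by positivity), ← sqrt_mul (by positivity), h.prod_eq,
    sqrt_div' _ (by norm_num), show (16 : ℝ) = 4 ^ 2 by norm_num, sqrt_sq (by norm_num)]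

theorem sum_sqrt_le (h : ReducedCoeffs p a₁ a₂ a₃ a₄) :
    √a₁ + √a₂ + √a₃ + √a₄ ≤ 2.0275 * √p := by
  obtain ⟨ha₁, ha₂, ha₃, ha₄⟩ := h.pos
  have hp := h.seventeen_le
  have h₄ : a₄ ≤ 4 / 27 * p := by
    have := h.one_le_a₁; have := h.three_div_four_le_a₂; have := h.nine_div_sixteen_le_a₃
    have : 27 / 64 ≤ a₁ * a₂ * a₃ :=
      calc (27 / 64 : ℝ) = 1 * (3 / 4) * (9 / 16) := by norm_num
        _ ≤ a₁ * a₂ * a₃ := by gcongr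
    nlinarith [mul_le_mul_of_nonneg_right this ha₄.le, h.prod_eq]
  have b₄ : √a₄ ≤ 0.39 * √p := sqrt_le_mul_sqrt_of_le_sq_mul (by norm_num) (by linarith)
  have b₃ : √a₃ ≤ 0.45 * √p :=
    sqrt_le_mul_sqrt_of_le_sq_mul (by norm_num) (by linarith [h.le_a₄])
  have b₂ : √a₂ ≤ 0.52 * √p :=
    sqrt_le_mul_sqrt_of_le_sq_mul (by norm_num) (by linarith [h.le_a₃, h.le_a₄])
  have b₁ : √a₁ ≤ 0.6 * √p :=
    sqrt_le_mul_sqrt_of_le_sq_mul (by norm_num) (by linarith [h.le_a₂, h.le_a₃, h.le_a₄])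
  linarith [sqrt_nonneg p]

theorem sum_sqrt_mul_sqrt_le (h : ReducedCoeffs p a₁ a₂ a₃ a₄) :
    √a₁ * √a₂ + √a₁ * √a₃ + √a₁ * √a₄ + √a₂ * √a₃ + √a₂ * √a₄ + √a₃ * √a₄ ≤
      1.905625 * √p := by
  obtain ⟨ha₁, ha₂, ha₃, ha₄⟩ := h.pos
  have hp := h.seventeen_le
  simp only [← sqrt_mul ha₁.le, ← sqrt_mul ha₂.le, ← sqrt_mul ha₃.le]
  have b₁₂ : √(a₁ * a₂) ≤ 0.32832 * √p :=
    sqrt_le_mul_sqrt_of_pow_succ_le (k := 1) (K := 16 / 81) (by norm_num) (by norm_num) hp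
      (h.sq_a₁_mul_a₂_le.trans_eq (by ring)) (by norm_num)
  have b₁₃ : √(a₁ * a₃) ≤ 0.28434 * √p :=
    sqrt_le_mul_sqrt_of_pow_succ_le (k := 1) (K := 1 / 9) (by norm_num) (by norm_num) hp
      (h.sq_a₁_mul_a₃_le.trans_eq (by ring)) (by norm_num)
  have b₂₃ : √(a₂ * a₃) ≤ 0.28578 * √p :=
    sqrt_le_mul_sqrt_of_pow_succ_le (k := 2) (by norm_num) (by norm_num) hp
      h.pow_three_a₂_mul_a₃_le (by norm_num)
  have b₁₄ : √(a₁ * a₄) ≤ 0.38491 * √p := by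
    have : 27 / 64 ≤ a₂ * a₃ := by nlinarith [h.three_div_four_le_a₂, h.nine_div_sixteen_le_a₃]
    refine sqrt_le_mul_sqrt_of_le_sq_mul (by norm_num) ?_
    nlinarith [mul_le_mul_of_nonneg_left this (by positivity : 0 ≤ a₁ * a₄), h.prod_eq]
  have b₂₄ : √(a₂ * a₄) ≤ 1 / 3 * √p := by
    have : 9 / 16 ≤ a₁ * a₃ := by nlinarith [h.one_le_a₁, h.nine_div_sixteen_le_a₃]
    refine sqrt_le_mul_sqrt_of_le_sq_mul (by norm_num) ?_
    nlinarith [mul_le_mul_of_nonneg_left this (by positivity : 0 ≤ a₂ * a₄), h.prod_eq]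
  have b₃₄ : √(a₃ * a₄) ≤ 0.28868 * √p := by
    have : 3 / 4 ≤ a₁ * a₂ := by nlinarith [h.one_le_a₁, h.three_div_four_le_a₂]
    refine sqrt_le_mul_sqrt_of_le_sq_mul (by norm_num) ?_
    nlinarith [mul_le_mul_of_nonneg_left this (by positivity : 0 ≤ a₃ * a₄), h.prod_eq]
  linarith [sqrt_nonneg p]

theorem sum_sqrt_mul_sqrt_mul_sqrt_le (h : ReducedCoeffs p a₁ a₂ a₃ a₄) :
    √a₁ * √a₂ * √a₃ + √a₁ * √a₂ * √a₄ + √a₁ * √a₃ * √a₄ + √a₂ * √a₃ * √a₄ ≤ 1.18 * √p := by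
  obtain ⟨ha₁, ha₂, ha₃, ha₄⟩ := h.pos
  have hp := h.seventeen_le
  simp only [← sqrt_mul ha₁.le, ← sqrt_mul ha₂.le, ← sqrt_mul (mul_pos ha₁ ha₂).le,
    ← sqrt_mul (mul_pos ha₁ ha₃).le, ← sqrt_mul (mul_pos ha₂ ha₃).le]
  have b₁₂₃ : √(a₁ * a₂ * a₃) ≤ 0.30786 * √p :=
    sqrt_le_mul_sqrt_of_pow_succ_le (k := 3) (by norm_num) (by norm_num) hp
      h.pow_four_a₁_mul_a₂_mul_a₃_le (by norm_num)
  have b₁₂₄ : √(a₁ * a₂ * a₄) ≤ 1 / 3 * √p := by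
    refine sqrt_le_mul_sqrt_of_le_sq_mul (by norm_num) ?_
    nlinarith [mul_le_mul_of_nonneg_left h.nine_div_sixteen_le_a₃
      (by positivity : 0 ≤ a₁ * a₂ * a₄), h.prod_eq]
  have b₁₃₄ : √(a₁ * a₃ * a₄) ≤ 0.28868 * √p := by
    refine sqrt_le_mul_sqrt_of_le_sq_mul (by norm_num) ?_
    nlinarith [mul_le_mul_of_nonneg_left h.three_div_four_le_a₂
      (by positivity : 0 ≤ a₁ * a₃ * a₄), h.prod_eq]
  have b₂₃₄ : √(a₂ * a₃ * a₄) ≤ 1 / 4 * √p := by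
    refine sqrt_le_mul_sqrt_of_le_sq_mul (by norm_num) ?_
    nlinarith [mul_le_mul_of_nonneg_left h.one_le_a₁
      (by positivity : 0 ≤ a₂ * a₃ * a₄), h.prod_eq]
  linarith [sqrt_nonneg p]

end ReducedCoeffs

theorem lattice_point_count_bound_general (p x a₁ a₂ a₃ a₄ : ℝ) (hp : 17 ≤ p) (hx : 0 < x)
    (h1 : 1 ≤ a₁)
    (hprod : a₁ * a₂ * a₃ * a₄ = p / 16)
    (h12 : (3 / 4) * a₁ ≤ a₂) (h23 : (3 / 4) * a₂ ≤ a₃) (h34 : (3 / 4) * a₃ ≤ a₄) :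
    (4 * Real.sqrt (x * a₁ / p) + 1) * (4 * Real.sqrt (x * a₂ / p) + 1) *
        (4 * Real.sqrt (x * a₃ / p) + 1) * (4 * Real.sqrt (x * a₄ / p) + 1) ≤
      64 * x ^ 2 * p ^ (-(3 : ℝ) / 2) + 75.52 * x ^ ((3 : ℝ) / 2) * p⁻¹ +
        30.49 * x * p ^ (-(1 : ℝ) / 2) + 8.11 * x ^ ((1 : ℝ) / 2) + 1 := by
  have h : ReducedCoeffs p a₁ a₂ a₃ a₄ := ⟨hp, h1, h12, h23, h34, hprod⟩
  have hp₀ : 0 < p := by linarith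
  have hsqrt (a : ℝ) : 4 * √(x * a / p) = 4 * √x / √p * √a := by
    rw [sqrt_div' _ hp₀.le, sqrt_mul hx.le]; ring
  rw [hsqrt, hsqrt, hsqrt, hsqrt]
  refine (prod_mul_add_one_le_of_esymm_le (by positivity) h.sum_sqrt_le
    h.sum_sqrt_mul_sqrt_le h.sum_sqrt_mul_sqrt_mul_sqrt_le).trans_eq ?_
  have hs : 0 < √p := sqrt_pos.2 hp₀
  rw [h.sqrt_prod, rpow_div_two_eq_sqrt _ hx.le, rpow_div_two_eq_sqrt _ hx.le,
    rpow_div_two_eq_sqrt _ hp₀.le, rpow_div_two_eq_sqrt _ hp₀.le]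
  simp only [rpow_neg hs.le, rpow_one, rpow_ofNat]
  set s := √p
  set t := √x
  rw [show x = t ^ 2 from (sq_sqrt hx.le).symm, show p = s ^ 2 from (sq_sqrt hp₀.le).symm]
  field_simp
  ring

theorem lattice_point_count_bound (p x a₁ a₂ a₃ a₄ : ℝ) (hp : 17 ≤ p) (hx : 0 < x)
    (h1 : 1 ≤ a₁) (h2 : 3 / 4 ≤ a₂) (h3 : 9 / 16 ≤ a₃) (h4 : 0 < a₄)
    (hprod : a₁ * a₂ * a₃ * a₄ = p / 16)
    (h12 : (3 / 4) * a₁ ≤ a₂) (h23 : (3 / 4) * a₂ ≤ a₃) (h34 : (3 / 4) * a₃ ≤ a₄) :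
    (4 * Real.sqrt (x * a₁ / p) + 1) * (4 * Real.sqrt (x * a₂ / p) + 1) *
        (4 * Real.sqrt (x * a₃ / p) + 1) * (4 * Real.sqrt (x * a₄ / p) + 1) ≤
      64 * x ^ 2 * p ^ (-(3 : ℝ) / 2) + 75.52 * x ^ ((3 : ℝ) / 2) * p⁻¹ +
        30.49 * x * p ^ (-(1 : ℝ) / 2) + 8.11 * x ^ ((1 : ℝ) / 2) + 1 :=
  lattice_point_count_bound_general p x a₁ a₂ a₃ a₄ hp hx h1 hprod h12 h23 h34
end
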